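/- Automated judge conviction: with Buyer = (x)( tell (send(x) ↠ pay(x)). fuse_x pay(x). CheckOut ), CheckOut = τ.NoPay + τ.tell paid(x).( τ.tell dispute(x) + ask sent(x) ), Seller = (y)( tell (pay(y) ↠ send(y)). fuse_y send(y). Ship ), Ship = τ.NoSend + τ.tell sent(y).( τ.tell dispute(y) + ask paid(y) ), and Judge = (z)( join_z (pay(z) ∧ dispute(z)). check ¬paid(z). jailBuyer(z) | join_z (send(z) ∧ dispute(z)). check ¬sent(z). jailSeller(z) ), there is a sequence of ↣-reductions Buyer | Seller | Judge ↣* (n)( jailSeller(n) | R ) for some process R; in it the Buyer pays and opens a dispute, the Seller chooses NoSend, and the Judge joins the session n and convicts the Seller. -/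

import Mathlib

namespace Contracts

/-! ### Names, variables, substitutions -/

abbrev Name : Type := ℕ
abbrev Var : Type := ℕ
/-- Atoms: either names (`inl`) or variables (`inr`). -/
abbrev Atom : Type := Name ⊕ Var

/-- A substitution maps variables to atoms (names or variables). -/
abbrev Subst : Type := Var → Atom

def substAtom (σ : Subst) : Atom → Atom
  | .inl n => .inl n
  | .inr x => σ x

/-- The fusion `{x̄ → n}` replacing each variable in `V` by the name `n`. -/
def fuseSubst (V : Finset Var) (n : Name) : Subst := fun y =>
  if y ∈ V then .inl n else .inr y

/-- The substitution `{n/x}`. -/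
def singleSubst (x : Var) (n : Name) : Subst := fun y =>
  if y = x then .inl n else .inr y

/-- Transposition of two atoms (for alpha conversion). -/
def swapAtom (a b : Atom) : Atom → Atom := fun c =>
  if c = a then b else if c = b then a else c

/-! ### Constraint systems (Def 2.1), with substitution/renaming/free-atom structure -/

structure ConstraintSystem where
  D : Type
  bot : D
  entails : Set D → D → Prop
  subst : Subst → D → D
  ren : (Atom → Atom) → D → D
  fv : D → Set Atom

namespace ConstraintSystem

/-- The laws (i)-(iii) of Def 2.1. -/
def Lawful (CS : ConstraintSystem) : Prop :=
  (∀ (C : Set CS.D) (c : CS.D), c ∈ C → CS.entails C c) ∧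
  (∀ (C C' : Set CS.D) (c : CS.D),
      (∀ c' ∈ C', CS.entails C c') → CS.entails C' c → CS.entails C c) ∧
  (∀ (C : Set CS.D) (c : CS.D), CS.entails C CS.bot → CS.entails C c)

def substSet (CS : ConstraintSystem) (σ : Subst) (C : Set CS.D) : Set CS.D :=
  CS.subst σ '' C

/-- Minimal fusion (Def 2.4): `C ⊢min_{ {V→n} } c`. -/
def MinFusion (CS : ConstraintSystem) (C : Set CS.D) (V : Finset Var) (n : Name)
    (c : CS.D) : Prop :=
  CS.entails (CS.substSet (fuseSubst V n) C) (CS.subst (fuseSubst V n) c) ∧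
  ∀ W : Finset Var, W ⊂ V →
    ¬ CS.entails (CS.substSet (fuseSubst W n) C) (CS.subst (fuseSubst W n) c)

/-- Local minimal fusion (Def 2.6): `C ⊢loc_σ c` iff `∃ C' ⊆ C, C' ⊢min_σ c`. -/
def LocMinFusion (CS : ConstraintSystem) (C : Set CS.D) (V : Finset Var) (n : Name)
    (c : CS.D) : Prop :=
  ∃ C' ⊆ C, CS.MinFusion C' V n c

end ConstraintSystem

/-! ### Process syntax -/

inductive Prefix (D : Type) : Type where
  | tau
  | tell (c : D)
  | check (c : D)
  | ask (c : D)
  | join (x : Var) (c : D)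
  | fuse (x : Var) (c : D)

/-- Processes.  Sums `Σ πᵢ.Pᵢ` are built from `nil` (the empty sum `0`), guarded
processes `act π P` (i.e. `π.P`) and binary `choice` (`+`). -/
inductive Proc (D : Type) : Type where
  | nil
  | con (c : D)
  | act (π : Prefix D) (P : Proc D)
  | choice (P Q : Proc D)
  | par (P Q : Proc D)
  | delim (a : Atom) (P : Proc D)
  | const (X : ℕ) (args : List Atom)

/-- Substitution on prefixes; note `(fuse_x c){n/x} = (join_x c){n/x} = ask (c{n/x})`. -/
def Prefix.substP (CS : ConstraintSystem) (σ : Subst) : Prefix CS.D → Prefix CS.D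
  | .tau => .tau
  | .tell c => .tell (CS.subst σ c)
  | .check c => .check (CS.subst σ c)
  | .ask c => .ask (CS.subst σ c)
  | .join x c =>
    match σ x with
    | .inl _ => .ask (CS.subst σ c)
    | .inr y => .join y (CS.subst σ c)
  | .fuse x c =>
    match σ x with
    | .inl _ => .ask (CS.subst σ c)
    | .inr y => .fuse y (CS.subst σ c)

/-- Mask a substitution on a bound atom. -/
def maskAtom (σ : Subst) : Atom → Subst
  | .inl _ => σ
  | .inr y => fun z => if z = y then .inr z else σ z

def Proc.subst (CS : ConstraintSystem) (σ : Subst) : Proc CS.D → Proc CS.D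
  | .nil => .nil
  | .con c => .con (CS.subst σ c)
  | .act π P => .act (π.substP CS σ) (P.subst CS σ)
  | .choice P Q => .choice (P.subst CS σ) (Q.subst CS σ)
  | .par P Q => .par (P.subst CS σ) (Q.subst CS σ)
  | .delim a P => .delim a (P.subst CS (maskAtom σ a))
  | .const X args => .const X (args.map (substAtom σ))

/-- Renaming of all atom occurrences (including binders), used for alpha conversion. -/
def Prefix.renP (CS : ConstraintSystem) (f : Atom → Atom) : Prefix CS.D → Prefix CS.D
  | .tau => .tau
  | .tell c => .tell (CS.ren f c)
  | .check c => .check (CS.ren f c)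
  | .ask c => .ask (CS.ren f c)
  | .join x c =>
    match f (.inr x) with
    | .inl _ => .ask (CS.ren f c)
    | .inr y => .join y (CS.ren f c)
  | .fuse x c =>
    match f (.inr x) with
    | .inl _ => .ask (CS.ren f c)
    | .inr y => .fuse y (CS.ren f c)

def Proc.ren (CS : ConstraintSystem) (f : Atom → Atom) : Proc CS.D → Proc CS.D
  | .nil => .nil
  | .con c => .con (CS.ren f c)
  | .act π P => .act (π.renP CS f) (P.ren CS f)
  | .choice P Q => .choice (P.ren CS f) (Q.ren CS f)
  | .par P Q => .par (P.ren CS f) (Q.ren CS f)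
  | .delim a P => .delim (f a) (P.ren CS f)
  | .const X args => .const X (args.map f)

def Prefix.fvP (CS : ConstraintSystem) : Prefix CS.D → Set Atom
  | .tau => ∅
  | .tell c => CS.fv c
  | .check c => CS.fv c
  | .ask c => CS.fv c
  | .join x c => insert (Sum.inr x) (CS.fv c)
  | .fuse x c => insert (Sum.inr x) (CS.fv c)

/-- Free atoms of a process. -/
def Proc.free (CS : ConstraintSystem) : Proc CS.D → Set Atom
  | .nil => ∅
  | .con c => CS.fv c
  | .act π P => π.fvP CS ∪ P.free CS
  | .choice P Q => P.free CS ∪ Q.free CS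
  | .par P Q => P.free CS ∪ Q.free CS
  | .delim a P => P.free CS \ {a}
  | .const _ args => {a | a ∈ args}

/-- All atoms of a process (including bound ones). -/
def Proc.atoms (CS : ConstraintSystem) : Proc CS.D → Set Atom
  | .nil => ∅
  | .con c => CS.fv c
  | .act π P => π.fvP CS ∪ P.atoms CS
  | .choice P Q => P.atoms CS ∪ Q.atoms CS
  | .par P Q => P.atoms CS ∪ Q.atoms CS
  | .delim a P => insert a (P.atoms CS)
  | .const _ args => {a | a ∈ args}

/-- Iterated delimitation `(a₁)…(aₖ)P`. -/
def delims {D : Type} (l : List Atom) (P : Proc D) : Proc D := l.foldr Proc.delim P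

/-- Parallel composition of a list of processes. -/
def parList {D : Type} (l : List (Proc D)) : Proc D := l.foldr Proc.par Proc.nil

/-- A set `C = {c₁, c₂, …}` of constraints used as a process `c₁ | c₂ | ⋯`. -/
def conList {D : Type} (C : List D) : Proc D := parList (C.map Proc.con)

/-- Environments of defining equations `X(x̄) ≐ P`. -/
abbrev Env (D : Type) : Type := ℕ → List Var × Proc D

def mkSubst (params : List Var) (args : List Atom) : Subst := fun z =>
  match params.findIdx? (fun w => w == z) with
  | some i => args.getD i (.inr z)
  | none => .inr z

def unfoldConst (CS : ConstraintSystem) (env : Env CS.D) (X : ℕ) (args : List Atom) :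
    Proc CS.D :=
  ((env X).2).subst CS (mkSubst (env X).1 args)

/-- Sums `Σ πᵢ.Pᵢ`. -/
def IsSum {D : Type} : Proc D → Prop
  | .nil => True
  | .act _ _ => True
  | .choice P Q => IsSum P ∧ IsSum Q
  | _ => False

/-- A process free from active (top-level) constraints. -/
def NoActiveCon {D : Type} : Proc D → Prop
  | .con _ => False
  | .par P Q => NoActiveCon P ∧ NoActiveCon Q
  | .delim _ P => NoActiveCon P
  | _ => True

/-- Every occurrence of a constant is guarded (behind a prefix). -/
def Guarded {D : Type} : Proc D → Prop
  | .const _ _ => False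
  | .act _ _ => True
  | .choice P Q => Guarded P ∧ Guarded Q
  | .par P Q => Guarded P ∧ Guarded Q
  | .delim _ P => Guarded P
  | _ => True

/-! ### Alpha conversion and structural equivalence -/

inductive AlphaEq (CS : ConstraintSystem) : Proc CS.D → Proc CS.D → Prop where
  | refl (P) : AlphaEq CS P P
  | symm {P Q} (h : AlphaEq CS P Q) : AlphaEq CS Q P
  | trans {P Q R} (h1 : AlphaEq CS P Q) (h2 : AlphaEq CS Q R) : AlphaEq CS P R
  | act {π P Q} (h : AlphaEq CS P Q) : AlphaEq CS (.act π P) (.act π Q)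
  | choice {P P' Q Q'} (h1 : AlphaEq CS P P') (h2 : AlphaEq CS Q Q') :
      AlphaEq CS (.choice P Q) (.choice P' Q')
  | par {P P' Q Q'} (h1 : AlphaEq CS P P') (h2 : AlphaEq CS Q Q') :
      AlphaEq CS (.par P Q) (.par P' Q')
  | delim {a P Q} (h : AlphaEq CS P Q) : AlphaEq CS (.delim a P) (.delim a Q)
  | rename {a b : Atom} {P : Proc CS.D} (h : b ∉ P.atoms CS) :
      AlphaEq CS (.delim a P) (.delim b (P.ren CS (swapAtom a b)))

/-- Structural equivalence `≡` (Sect. 2), on processes taken up to alpha-conversion. -/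
inductive StructEq (CS : ConstraintSystem) (env : Env CS.D) :
    Proc CS.D → Proc CS.D → Prop where
  | refl (P) : StructEq CS env P P
  | symm {P Q} (h : StructEq CS env P Q) : StructEq CS env Q P
  | trans {P Q R} (h1 : StructEq CS env P Q) (h2 : StructEq CS env Q R) :
      StructEq CS env P R
  | alpha {P Q} (h : AlphaEq CS P Q) : StructEq CS env P Q
  | parNil (P) : StructEq CS env (.par P .nil) P
  | parComm (P Q) : StructEq CS env (.par P Q) (.par Q P)
  | parAssoc (P Q R) : StructEq CS env (.par (.par P Q) R) (.par P (.par Q R))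
  | choiceNil (P) : StructEq CS env (.choice P .nil) P
  | choiceComm (P Q) : StructEq CS env (.choice P Q) (.choice Q P)
  | choiceAssoc (P Q R) :
      StructEq CS env (.choice (.choice P Q) R) (.choice P (.choice Q R))
  | scope {a : Atom} {P Q : Proc CS.D} (h : a ∉ P.free CS) :
      StructEq CS env (.delim a (.par P Q)) (.par P (.delim a Q))
  | delimSwap (a b : Atom) (P) :
      StructEq CS env (.delim a (.delim b P)) (.delim b (.delim a P))
  | unfold (X : ℕ) (args : List Atom) :
      StructEq CS env (.const X args) (unfoldConst CS env X args)
  | actCong {π P Q} (h : StructEq CS env P Q) :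
      StructEq CS env (.act π P) (.act π Q)
  | choiceCong {P P' Q Q'} (h1 : StructEq CS env P P') (h2 : StructEq CS env Q Q') :
      StructEq CS env (.choice P Q) (.choice P' Q')
  | parCong {P P' Q Q'} (h1 : StructEq CS env P P') (h2 : StructEq CS env Q Q') :
      StructEq CS env (.par P Q) (.par P' Q')
  | delimCong {a P Q} (h : StructEq CS env P Q) :
      StructEq CS env (.delim a P) (.delim a Q)

/-! ### Reduction semantics (Fig. 1) -/

inductive Red (CS : ConstraintSystem) (env : Env CS.D) : Proc CS.D → Proc CS.D → Prop where
  | tauR (as : List Atom) (P Q R : Proc CS.D) :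
      Red CS env (delims as (.par (.choice (.act .tau P) Q) R)) (delims as (.par P R))
  | tellR (as : List Atom) (c : CS.D) (P Q R : Proc CS.D) :
      Red CS env (delims as (.par (.choice (.act (.tell c) P) Q) R))
        (delims as (.par (.con c) (.par P R)))
  | askR (as : List Atom) (C : List CS.D) (c : CS.D) (P Q R : Proc CS.D)
      (h : CS.entails {d | d ∈ C} c) :
      Red CS env (delims as (.par (conList C) (.par (.choice (.act (.ask c) P) Q) R)))
        (delims as (.par (conList C) (.par P R)))
  | checkR (as : List Atom) (C : List CS.D) (c : CS.D) (P Q R : Proc CS.D)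
      (h1 : ¬ CS.entails (insert c {d | d ∈ C}) CS.bot) (h2 : NoActiveCon R) :
      Red CS env (delims as (.par (conList C) (.par (.choice (.act (.check c) P) Q) R)))
        (delims as (.par (conList C) (.par P R)))
  | fuseR (as : List Atom) (vs : Finset Var) (x : Var) (n : Name) (C : List CS.D)
      (c : CS.D) (P Q R : Proc CS.D) (hx : x ∈ vs)
      (hfresh : (Sum.inl n : Atom) ∉ P.free CS ∧ (Sum.inl n : Atom) ∉ Q.free CS ∧
        (Sum.inl n : Atom) ∉ R.free CS ∧ (∀ d ∈ C, (Sum.inl n : Atom) ∉ CS.fv d) ∧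
        (Sum.inl n : Atom) ∉ CS.fv c ∧ (Sum.inl n : Atom) ∉ as)
      (hmin : CS.MinFusion {d | d ∈ C} vs n c) :
      Red CS env
        (delims (vs.toList.map (Sum.inr : Var → Atom) ++ as)
          (.par (conList C) (.par (.choice (.act (.fuse x c) P) Q) R)))
        (delims (Sum.inl n :: as)
          ((Proc.par (conList C) (.par P R)).subst CS (fuseSubst vs n)))
  | joinR (as : List Atom) (x : Var) (n : Name) (C : List CS.D) (c : CS.D)
      (P Q R : Proc CS.D)
      (h : CS.entails (CS.substSet (singleSubst x n) {d | d ∈ C})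
             (CS.subst (singleSubst x n) c)) :
      Red CS env
        (delims (Sum.inr x :: Sum.inl n :: as)
          (.par (conList C) (.par (.choice (.act (.join x c) P) Q) R)))
        (delims (Sum.inl n :: as)
          ((Proc.par (conList C) (.par P R)).subst CS (singleSubst x n)))
  | structR {P P' Q Q' : Proc CS.D} (h1 : StructEq CS env P P')
      (h2 : Red CS env P' Q') (h3 : StructEq CS env Q' Q) : Red CS env P Q

/-! ### Actions and the labelled transition semantics (Fig. 2) -/

inductive BAct (D : Type) where
  | tau
  | constr (C : Set D)
  | askA (C : Set D) (c : D)
  | fuseA (C : Set D) (x : Var) (c : D)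
  | joinA (C : Set D) (x : Var) (c : D)
  | checkA (C : Set D)

/-- Actions `α ::= (ā) β` where `β` is a base action; the order of the
delimitations `(ā)` is neglected, as in the paper. -/
structure Act (D : Type) where
  binders : Finset Atom
  base : BAct D

def setFv (CS : ConstraintSystem) (C : Set CS.D) : Set Atom := ⋃ d ∈ C, CS.fv d

def BAct.fa (CS : ConstraintSystem) : BAct CS.D → Set Atom
  | .tau => ∅
  | .constr C => setFv CS C
  | .askA C c => setFv CS C ∪ CS.fv c
  | .fuseA C x c => setFv CS C ∪ CS.fv c ∪ {Sum.inr x}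
  | .joinA C x c => setFv CS C ∪ CS.fv c ∪ {Sum.inr x}
  | .checkA C => setFv CS C

def Act.fa (CS : ConstraintSystem) (α : Act CS.D) : Set Atom :=
  α.base.fa CS ∪ ↑α.binders

/-- No-capture side condition of the `Par*` rules: `ā` is fresh in `b̄`, the
tentative base action and `Q'`, while `b̄` is fresh in `C` and `P'`. -/
def SideCond (CS : ConstraintSystem) (A B : Finset Atom) (C : Set CS.D)
    (β : BAct CS.D) (P' Q' : Proc CS.D) : Prop :=
  (∀ a ∈ A, a ∉ B ∧ a ∉ β.fa CS ∧ a ∉ Q'.free CS) ∧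
  (∀ b ∈ B, b ∉ setFv CS C ∧ b ∉ P'.free CS)

inductive LTS (CS : ConstraintSystem) (env : Env CS.D) :
    Proc CS.D → Act CS.D → Proc CS.D → Prop where
  | tauA {P} : LTS CS env (.act .tau P) ⟨∅, .tau⟩ P
  | tellA {c P} : LTS CS env (.act (.tell c) P) ⟨∅, .tau⟩ (.par (.con c) P)
  | askA {c P} : LTS CS env (.act (.ask c) P) ⟨∅, .askA ∅ c⟩ P
  | checkA {c P} : LTS CS env (.act (.check c) P) ⟨∅, .checkA {c}⟩ P
  | fuseA {x c P} : LTS CS env (.act (.fuse x c) P) ⟨∅, .fuseA ∅ x c⟩ P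
  | joinA {x c P} : LTS CS env (.act (.join x c) P) ⟨∅, .joinA ∅ x c⟩ P
  | constrA {u} : LTS CS env (.con u) ⟨∅, .constr {u}⟩ (.con u)
  | idleSum {P} (h : IsSum P) : LTS CS env P ⟨∅, .constr ∅⟩ P
  | parConstr {P Q P' Q' : Proc CS.D} {A B : Finset Atom} {C C' : Set CS.D}
      (h1 : LTS CS env P ⟨A, .constr C⟩ P') (h2 : LTS CS env Q ⟨B, .constr C'⟩ Q')
      (hs : SideCond CS A B C (.constr C') P' Q') :
      LTS CS env (.par P Q) ⟨A ∪ B, .constr (C ∪ C')⟩ (.par P' Q')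
  | parAskL {P Q P' Q' A B C C' c}
      (h1 : LTS CS env P ⟨A, .constr C⟩ P') (h2 : LTS CS env Q ⟨B, .askA C' c⟩ Q')
      (hs : SideCond CS A B C (.askA C' c) P' Q') :
      LTS CS env (.par P Q) ⟨A ∪ B, .askA (C ∪ C') c⟩ (.par P' Q')
  | parAskR {P Q P' Q' A B C C' c}
      (h1 : LTS CS env P ⟨B, .askA C' c⟩ P') (h2 : LTS CS env Q ⟨A, .constr C⟩ Q')
      (hs : SideCond CS A B C (.askA C' c) Q' P') :
      LTS CS env (.par P Q) ⟨A ∪ B, .askA (C ∪ C') c⟩ (.par P' Q')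
  | parFuseL {P Q P' Q' A B C C' x c}
      (h1 : LTS CS env P ⟨A, .constr C⟩ P') (h2 : LTS CS env Q ⟨B, .fuseA C' x c⟩ Q')
      (hs : SideCond CS A B C (.fuseA C' x c) P' Q') :
      LTS CS env (.par P Q) ⟨A ∪ B, .fuseA (C ∪ C') x c⟩ (.par P' Q')
  | parFuseR {P Q P' Q' A B C C' x c}
      (h1 : LTS CS env P ⟨B, .fuseA C' x c⟩ P') (h2 : LTS CS env Q ⟨A, .constr C⟩ Q')
      (hs : SideCond CS A B C (.fuseA C' x c) Q' P') :
      LTS CS env (.par P Q) ⟨A ∪ B, .fuseA (C ∪ C') x c⟩ (.par P' Q')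
  | parJoinL {P Q P' Q' A B C C' x c}
      (h1 : LTS CS env P ⟨A, .constr C⟩ P') (h2 : LTS CS env Q ⟨B, .joinA C' x c⟩ Q')
      (hs : SideCond CS A B C (.joinA C' x c) P' Q') :
      LTS CS env (.par P Q) ⟨A ∪ B, .joinA (C ∪ C') x c⟩ (.par P' Q')
  | parJoinR {P Q P' Q' A B C C' x c}
      (h1 : LTS CS env P ⟨B, .joinA C' x c⟩ P') (h2 : LTS CS env Q ⟨A, .constr C⟩ Q')
      (hs : SideCond CS A B C (.joinA C' x c) Q' P') :
      LTS CS env (.par P Q) ⟨A ∪ B, .joinA (C ∪ C') x c⟩ (.par P' Q')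
  | parCheckL {P Q P' Q' A B C C'}
      (h1 : LTS CS env P ⟨A, .constr C⟩ P') (h2 : LTS CS env Q ⟨B, .checkA C'⟩ Q')
      (hs : SideCond CS A B C (.checkA C') P' Q') :
      LTS CS env (.par P Q) ⟨A ∪ B, .checkA (C ∪ C')⟩ (.par P' Q')
  | parCheckR {P Q P' Q' A B C C'}
      (h1 : LTS CS env P ⟨B, .checkA C'⟩ P') (h2 : LTS CS env Q ⟨A, .constr C⟩ Q')
      (hs : SideCond CS A B C (.checkA C') Q' P') :
      LTS CS env (.par P Q) ⟨A ∪ B, .checkA (C ∪ C')⟩ (.par P' Q')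
  | parTauL {P P' Q} (h : LTS CS env P ⟨∅, .tau⟩ P') :
      LTS CS env (.par P Q) ⟨∅, .tau⟩ (.par P' Q)
  | parTauR {P Q Q'} (h : LTS CS env Q ⟨∅, .tau⟩ Q') :
      LTS CS env (.par P Q) ⟨∅, .tau⟩ (.par P Q')
  | sumL {P Q α P'} (h : LTS CS env P α P') (hP : IsSum P)
      (hn : ∀ C, α.base ≠ .constr C) : LTS CS env (.choice P Q) α P'
  | sumR {P Q α Q'} (h : LTS CS env Q α Q') (hQ : IsSum Q)
      (hn : ∀ C, α.base ≠ .constr C) : LTS CS env (.choice P Q) α Q'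
  | defC {X args α P'} (h : LTS CS env (unfoldConst CS env X args) α P') :
      LTS CS env (.const X args) α P'
  | del {P α P' a} (h : LTS CS env P α P') (ha : a ∉ α.fa CS) :
      LTS CS env (.delim a P) α (.delim a P')
  | openB {P P' a} {A : Finset Atom} {β : BAct CS.D} (h : LTS CS env P ⟨A, β⟩ P') :
      LTS CS env (.delim a P) ⟨insert a A, β⟩ P'
  | closeAsk {P P'} {A : Finset Atom} {C : Set CS.D} {c}
      (h : LTS CS env P ⟨A, .askA C c⟩ P') (he : CS.entails C c) :
      LTS CS env P ⟨∅, .tau⟩ (delims A.toList P')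
  | closeFuse {P P'} {A : Finset Atom} {C : Set CS.D} {x c}
      (h : LTS CS env P ⟨A, .fuseA C x c⟩ P')
      (vs : Finset Var) (hx : x ∈ vs) (hvs : ∀ v ∈ vs, (Sum.inr v : Atom) ∈ A)
      (n : Name)
      (hfresh : (Sum.inl n : Atom) ∉ P'.free CS ∧ (Sum.inl n : Atom) ∉ setFv CS C ∧
        (Sum.inl n : Atom) ∉ CS.fv c ∧ (Sum.inl n : Atom) ∉ A)
      (hloc : CS.LocMinFusion C vs n c) :
      LTS CS env P ⟨∅, .tau⟩
        (delims (Sum.inl n :: (A \ vs.image (Sum.inr : Var → Atom)).toList)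
          (P'.subst CS (fuseSubst vs n)))
  | closeJoin {P P'} {A : Finset Atom} {C : Set CS.D} {x c} {n : Name}
      (h : LTS CS env P ⟨A, .joinA C x c⟩ P')
      (hx : (Sum.inr x : Atom) ∈ A) (hn : (Sum.inl n : Atom) ∈ A)
      (he : CS.entails (CS.substSet (singleSubst x n) C) (CS.subst (singleSubst x n) c)) :
      LTS CS env P ⟨∅, .tau⟩
        (delims ((A.erase (Sum.inr x)).toList) (P'.subst CS (singleSubst x n)))
  | alphaC {P Q α P'} (h : AlphaEq CS P Q) (h2 : LTS CS env Q α P') :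
      LTS CS env P α P'

/-- Top-level reduction `↣` ([TopTau] and [TopCheck]). -/
inductive TopRed (CS : ConstraintSystem) (env : Env CS.D) :
    Proc CS.D → Proc CS.D → Prop where
  | topTau {P P'} (h : LTS CS env P ⟨∅, .tau⟩ P') : TopRed CS env P P'
  | topCheck {P P'} {A : Finset Atom} {C : Set CS.D}
      (h : LTS CS env P ⟨A, .checkA C⟩ P') (hc : ¬ CS.entails C CS.bot) :
      TopRed CS env P (delims A.toList P')

/-- `↣`-bisimilarity. -/
def IsBisim (CS : ConstraintSystem) (env : Env CS.D)
    (R : Proc CS.D → Proc CS.D → Prop) : Prop :=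
  (∀ P Q, R P Q → R Q P) ∧
  ∀ P Q, R P Q → ∀ P', TopRed CS env P P' → ∃ Q', TopRed CS env Q Q' ∧ R P' Q'

def Bisimilar (CS : ConstraintSystem) (env : Env CS.D) (P Q : Proc CS.D) : Prop :=
  ∃ R, IsBisim CS env R ∧ R P Q

/-- Renaming of actions (used to quotient by the choice of the fresh fused name). -/
def varOfAtom (x : Var) : Atom → Var
  | .inr v => v
  | .inl _ => x

def BAct.ren (CS : ConstraintSystem) (f : Atom → Atom) : BAct CS.D → BAct CS.D
  | .tau => .tau
  | .constr C => .constr (CS.ren f '' C)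
  | .askA C c => .askA (CS.ren f '' C) (CS.ren f c)
  | .fuseA C x c => .fuseA (CS.ren f '' C) (varOfAtom x (f (.inr x))) (CS.ren f c)
  | .joinA C x c => .joinA (CS.ren f '' C) (varOfAtom x (f (.inr x))) (CS.ren f c)
  | .checkA C => .checkA (CS.ren f '' C)

def Act.ren (CS : ConstraintSystem) (f : Atom → Atom) (α : Act CS.D) : Act CS.D :=
  ⟨α.binders.image f, α.base.ren CS f⟩

end Contracts
namespace Contracts

/-! ### PCL: propositional contract logic -/

inductive PCL (A : Type) : Type where
  | atom (a : A)
  | top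
  | bot
  | and (p q : PCL A)
  | or (p q : PCL A)
  | imp (p q : PCL A)
  | cimp (p q : PCL A)    -- contractual implication ↠

namespace PCL

/-- Hilbert-style provability for PCL: intuitionistic propositional logic
extended with the axioms `⊤ ↠ ⊤`, `(p ↠ p) → p` and
`(p' → p) → (p ↠ q) → (q → q') → (p' ↠ q')`. -/
inductive Proof {A : Type} : Set (PCL A) → PCL A → Prop where
  | ax {Γ : Set (PCL A)} {p} (h : p ∈ Γ) : Proof Γ p
  | mp {Γ} {p q} (h1 : Proof Γ (imp p q)) (h2 : Proof Γ p) : Proof Γ q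
  | axK {Γ} {p q} : Proof Γ (imp p (imp q p))
  | axS {Γ} {p q r} : Proof Γ (imp (imp p (imp q r)) (imp (imp p q) (imp p r)))
  | andI {Γ} {p q} : Proof Γ (imp p (imp q (and p q)))
  | andE1 {Γ} {p q} : Proof Γ (imp (and p q) p)
  | andE2 {Γ} {p q} : Proof Γ (imp (and p q) q)
  | orI1 {Γ} {p q} : Proof Γ (imp p (or p q))
  | orI2 {Γ} {p q} : Proof Γ (imp q (or p q))
  | orE {Γ} {p q r} : Proof Γ (imp (imp p r) (imp (imp q r) (imp (or p q) r)))
  | topI {Γ} : Proof Γ top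
  | botE {Γ} {p} : Proof Γ (imp bot p)
  | cimpTop {Γ} : Proof Γ (cimp top top)
  | cimpFix {Γ} {p} : Proof Γ (imp (cimp p p) p)
  | cimpMono {Γ} {p p' q q'} :
      Proof Γ (imp (imp p' p) (imp (cimp p q) (imp (imp q q') (cimp p' q'))))

end PCL

end Contracts
namespace Contracts

/-! ### PCL formulae over predicates applied to names/variables, as a constraint system -/

def PCL.mapAtoms {A B : Type} (f : A → B) : PCL A → PCL B
  | .atom a => .atom (f a)
  | .top => .top
  | .bot => .bot
  | .and p q => .and (p.mapAtoms f) (q.mapAtoms f)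
  | .or p q => .or (p.mapAtoms f) (q.mapAtoms f)
  | .imp p q => .imp (p.mapAtoms f) (q.mapAtoms f)
  | .cimp p q => .cimp (p.mapAtoms f) (q.mapAtoms f)

/-- Atomic formulae: a predicate applied to a tuple of names/variables. -/
abbrev PAtom (Pred : Type) : Type := Pred × List Atom

/-- PCL formulae over predicates `Pred`. -/
abbrev PForm (Pred : Type) : Type := PCL (PAtom Pred)

def pclFv {Pred : Type} : PForm Pred → Set Atom
  | .atom pa => {a | a ∈ pa.2}
  | .top => ∅
  | .bot => ∅
  | .and p q => pclFv p ∪ pclFv q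
  | .or p q => pclFv p ∪ pclFv q
  | .imp p q => pclFv p ∪ pclFv q
  | .cimp p q => pclFv p ∪ pclFv q

/-- Predicates occurring in a PCL formula. -/
def pclPreds {Pred : Type} : PForm Pred → Set Pred
  | .atom pa => {pa.1}
  | .top => ∅
  | .bot => ∅
  | .and p q => pclPreds p ∪ pclPreds q
  | .or p q => pclPreds p ∪ pclPreds q
  | .imp p q => pclPreds p ∪ pclPreds q
  | .cimp p q => pclPreds p ∪ pclPreds q

/-- The constraint system whose constraints are PCL formulae over `Pred`,
with entailment given by PCL provability. -/
def pclCS (Pred : Type) : ConstraintSystem where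
  D := PForm Pred
  bot := .bot
  entails := fun C c => PCL.Proof C c
  subst := fun σ => PCL.mapAtoms (fun pa => (pa.1, pa.2.map (substAtom σ)))
  ren := fun f => PCL.mapAtoms (fun pa => (pa.1, pa.2.map f))
  fv := pclFv

/-- Predicates occurring in the constraints of a prefix. -/
def Prefix.predsP {Pred : Type} : Prefix (PForm Pred) → Set Pred
  | .tau => ∅
  | .tell c => pclPreds c
  | .check c => pclPreds c
  | .ask c => pclPreds c
  | .join _ c => pclPreds c
  | .fuse _ c => pclPreds c

/-- Predicates occurring in the constraints of a process. -/
def Proc.preds {Pred : Type} : Proc (PForm Pred) → Set Pred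
  | .nil => ∅
  | .con c => pclPreds c
  | .act π P => π.predsP ∪ P.preds
  | .choice P Q => P.preds ∪ Q.preds
  | .par P Q => P.preds ∪ Q.preds
  | .delim _ P => P.preds
  | .const _ _ => ∅

end Contracts

namespace Contracts
namespace Judge

/-- Predicates of the automated-judge example. -/
inductive JPred : Type where
  | pay
  | send
  | paid
  | sent
  | dispute

abbrev F := PForm JPred

def CS : ConstraintSystem := pclCS JPred

def payP (t : Atom) : F := .atom (JPred.pay, [t])
def sendP (t : Atom) : F := .atom (JPred.send, [t])
def paidP (t : Atom) : F := .atom (JPred.paid, [t])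
def sentP (t : Atom) : F := .atom (JPred.sent, [t])
def disputeP (t : Atom) : F := .atom (JPred.dispute, [t])

/-- Negation `¬φ` abbreviates `φ → ⊥`. -/
def neg (p : F) : F := .imp p .bot

/-- `CheckOut = τ.NoPay + τ.tell paid(x).( τ.tell dispute(x) + ask sent(x) )`
where `x` is variable 0. -/
def CheckOut (NoPay : Proc F) : Proc F :=
  .choice (.act .tau NoPay)
    (.act .tau (.act (.tell (paidP (.inr 0)))
      (.choice (.act .tau (.act (.tell (disputeP (.inr 0))) .nil))
        (.act (.ask (sentP (.inr 0))) .nil))))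

/-- `Buyer = (x)( tell (send(x) ↠ pay(x)). fuse_x pay(x). CheckOut )`. -/
def Buyer (NoPay : Proc F) : Proc F :=
  .delim (.inr 0)
    (.act (.tell (.cimp (sendP (.inr 0)) (payP (.inr 0))))
      (.act (.fuse 0 (payP (.inr 0))) (CheckOut NoPay)))

/-- `Ship = τ.NoSend + τ.tell sent(y).( τ.tell dispute(y) + ask paid(y) )`
where `y` is variable 1. -/
def Ship (NoSend : Proc F) : Proc F :=
  .choice (.act .tau NoSend)
    (.act .tau (.act (.tell (sentP (.inr 1)))
      (.choice (.act .tau (.act (.tell (disputeP (.inr 1))) .nil))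
        (.act (.ask (paidP (.inr 1))) .nil))))

/-- `Seller = (y)( tell (pay(y) ↠ send(y)). fuse_y send(y). Ship )`. -/
def Seller (NoSend : Proc F) : Proc F :=
  .delim (.inr 1)
    (.act (.tell (.cimp (payP (.inr 1)) (sendP (.inr 1))))
      (.act (.fuse 1 (sendP (.inr 1))) (Ship NoSend)))

/-- `Judge = (z)( join_z (pay(z) ∧ dispute(z)). check ¬paid(z). jailBuyer(z)
             | join_z (send(z) ∧ dispute(z)). check ¬sent(z). jailSeller(z) )`
where `z` is variable 2, and `jailBuyer(z)`, `jailSeller(z)` are arbitrary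
processes with free variable 2. -/
def JudgeP (jailBuyer jailSeller : Proc F) : Proc F :=
  .delim (.inr 2)
    (.par
      (.act (.join 2 (.and (payP (.inr 2)) (disputeP (.inr 2))))
        (.act (.check (neg (paidP (.inr 2)))) jailBuyer))
      (.act (.join 2 (.and (sendP (.inr 2)) (disputeP (.inr 2))))
        (.act (.check (neg (sentP (.inr 2)))) jailSeller)))

end Judge
end Contracts

/-!
Rename the three session variables apart from each other and from the arbitrary
continuations, and pick a name `n` that occurs nowhere. Buyer and Seller tell `send(x) ↠ pay(x)`
and `pay(y) ↠ send(y)`; the Buyer's `fuse_x pay(x)` then fuses `x` and `y` into `n`, since the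
two contracts handshake to `pay(n)`, and the fusion is minimal because over two distinct atoms
they do not (a two-world Kripke countermodel). The Buyer tells `paid(n)` and `dispute(n)`, the
Judge joins `n` through `send(n) ∧ dispute(n)`, again by the handshake, and `check ¬sent(n)`
fires because the accumulated constraints have a classical model in which only `sent(n)` fails.
-/

namespace Contracts
namespace PCL

variable {A : Type} {Γ : Set (PCL A)}

theorem Proof.imp_self (p : PCL A) : Proof Γ (.imp p p) :=
  .mp (.mp (.axS (q := .imp p p)) .axK) .axK

theorem Proof.deduction {p q : PCL A} (h : Proof (insert p Γ) q) : Proof Γ (.imp p q) := by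
  induction h with
  | ax h =>
    rcases h with rfl | h
    · exact .imp_self _
    · exact .mp .axK (.ax h)
  | mp _ _ ih₁ ih₂ => exact .mp (.mp .axS ih₁) ih₂
  | axK => exact .mp .axK .axK
  | axS => exact .mp .axK .axS
  | andI => exact .mp .axK .andI
  | andE1 => exact .mp .axK .andE1
  | andE2 => exact .mp .axK .andE2
  | orI1 => exact .mp .axK .orI1
  | orI2 => exact .mp .axK .orI2
  | orE => exact .mp .axK .orE
  | topI => exact .mp .axK .topI
  | botE => exact .mp .axK .botE
  | cimpTop => exact .mp .axK .cimpTop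
  | cimpFix => exact .mp .axK .cimpFix
  | cimpMono => exact .mp .axK .cimpMono

/-- Weaken `b ↠ a` to `a ↠ a` along `a → b`, then apply `(a ↠ a) → a`. -/
theorem Proof.cimp_mp {a b : PCL A} (hba : Proof Γ (.cimp b a)) (hb : Proof Γ b) :
    Proof Γ a :=
  .mp .cimpFix (.mp (.mp (.mp .cimpMono (.mp .axK hb)) hba) (.imp_self a))

theorem Proof.handshake {a b : PCL A} (hab : PCL.cimp a b ∈ Γ) (hba : PCL.cimp b a ∈ Γ) :
    Proof Γ b :=
  have hba' : Proof Γ (.imp b a) :=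
    .deduction (.cimp_mp (.ax (Set.mem_insert_of_mem _ hba)) (.ax (Set.mem_insert _ _)))
  .mp .cimpFix (.mp (.mp (.mp .cimpMono hba') (.ax hab)) (.imp_self b))

/-- Reading `p ↠ q` as `q` gives a classical model of PCL. -/
def Holds (v : A → Prop) : PCL A → Prop
  | .atom a => v a
  | .top => True
  | .bot => False
  | .and p q => Holds v p ∧ Holds v q
  | .or p q => Holds v p ∨ Holds v q
  | .imp p q => Holds v p → Holds v q
  | .cimp _ q => Holds v q

theorem Proof.holds {v : A → Prop} {p : PCL A} (h : Proof Γ p) (hΓ : ∀ q ∈ Γ, Holds v q) :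
    Holds v p := by
  induction h with
  | ax h => exact hΓ _ h
  | mp _ _ ih₁ ih₂ => exact ih₁ ih₂
  | axK => exact fun a _ => a
  | axS => exact fun f g x => f x (g x)
  | andI => exact fun a b => ⟨a, b⟩
  | andE1 => exact fun h => h.1
  | andE2 => exact fun h => h.2
  | orI1 => exact .inl
  | orI2 => exact .inr
  | orE => exact fun f g h => h.elim f g
  | topI => exact trivial
  | botE => exact False.elim
  | cimpTop => exact trivial
  | cimpFix => exact id
  | cimpMono => exact fun _ hq hqq' => hqq' hq

/-- Two worlds `false ≤ true`; besides `q`, a designated pair `(a, b)` with `p ⊩ a` and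
`b ⊩ q` also forces `p ↠ q`. The axiom `(p ↠ p) → p` survives as long as every designated
`b` holds and every designated `a` fails at the top world. -/
def Forces (v : A → Bool → Prop) (prs : List (A × A)) : PCL A → Bool → Prop
  | .atom a, w => v a w
  | .top, _ => True
  | .bot, _ => False
  | .and p q, w => Forces v prs p w ∧ Forces v prs q w
  | .or p q, w => Forces v prs p w ∨ Forces v prs q w
  | .imp p q, w => ∀ w', w ≤ w' → Forces v prs p w' → Forces v prs q w'
  | .cimp p q, w => Forces v prs q w ∨
      ∃ pr ∈ prs, (∀ w', w ≤ w' → Forces v prs p w' → v pr.1 w') ∧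
        (∀ w', w ≤ w' → v pr.2 w' → Forces v prs q w')

section Forces

variable {v : A → Bool → Prop} {prs : List (A × A)}

theorem Forces.mono (hv : ∀ a, v a false → v a true) :
    ∀ (p : PCL A) {w w' : Bool}, w ≤ w' → Forces v prs p w → Forces v prs p w'
  | .atom a, w, w', hw, h => by
    cases w <;> cases w'
    exacts [h, hv _ h, absurd hw (by decide), h]
  | .top, _, _, _, _ => trivial
  | .bot, _, _, _, h => h
  | .and p q, _, _, hw, h => ⟨Forces.mono hv p hw h.1, Forces.mono hv q hw h.2⟩
  | .or p q, _, _, hw, h => h.imp (Forces.mono hv p hw) (Forces.mono hv q hw)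
  | .imp _ _, _, _, hw, h => fun w'' hw' hp => h w'' (hw.trans hw') hp
  | .cimp _ q, _, _, hw, h => h.imp (Forces.mono hv q hw) fun ⟨pr, hpr, h₁, h₂⟩ =>
      ⟨pr, hpr, fun w'' hw' => h₁ w'' (hw.trans hw'), fun w'' hw' => h₂ w'' (hw.trans hw')⟩

theorem Proof.forces (hv : ∀ a, v a false → v a true)
    (hprs : ∀ pr ∈ prs, v pr.2 true ∧ ¬ v pr.1 true) {p : PCL A} (h : Proof Γ p)
    (hΓ : ∀ q ∈ Γ, ∀ w, Forces v prs q w) : ∀ w, Forces v prs p w := by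
  induction h with
  | ax h => exact hΓ _ h
  | mp _ _ ih₁ ih₂ => exact fun w => ih₁ w w le_rfl (ih₂ w)
  | axK => exact fun _ _ _ hp _ h₂ _ => Forces.mono hv _ h₂ hp
  | axS =>
    exact fun _ _ _ hf _ h₂ hg _ h₃ hp => hf _ (h₂.trans h₃) hp _ le_rfl (hg _ h₃ hp)
  | andI => exact fun _ _ _ hp _ h₂ hq => ⟨Forces.mono hv _ h₂ hp, hq⟩
  | andE1 => exact fun _ _ _ hp => hp.1
  | andE2 => exact fun _ _ _ hp => hp.2
  | orI1 => exact fun _ _ _ hp => .inl hp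
  | orI2 => exact fun _ _ _ hp => .inr hp
  | orE => exact fun _ _ _ hf _ h₂ hg _ h₃ hpq => hpq.elim (hf _ (h₂.trans h₃)) (hg _ h₃)
  | topI => exact fun _ => trivial
  | botE => exact fun _ _ _ hp => hp.elim
  | cimpTop => exact fun _ => .inl trivial
  | cimpFix =>
    rintro _ _ _ (hp | ⟨pr, hpr, h₁, h₂⟩)
    · exact hp
    · exact absurd (h₁ true le_top (h₂ true le_top (hprs pr hpr).1)) (hprs pr hpr).2
  | cimpMono =>
    intro _ _ _ hpp _ h₂ hc _ h₃ hqq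
    rcases Forces.mono hv _ h₃ hc with hq | ⟨pr, hpr, h₁, h₂'⟩
    · exact .inl (hqq _ le_rfl hq)
    · exact .inr ⟨pr, hpr, fun _ h₄ hp' => h₁ _ h₄ (hpp _ (h₂.trans (h₃.trans h₄)) hp'),
        fun _ h₄ hb => hqq _ h₄ (h₂' _ h₄ hb)⟩

end Forces

/-- Countermodel: force only `b` and `d`, and only at the top world. -/
theorem not_proof_of_subset_cimp_pair {a b c d : A} (hab : a ≠ b) (had : a ≠ d) (hcb : c ≠ b)
    (hcd : c ≠ d) (hΓ : Γ ⊆ {.cimp (.atom a) (.atom b), .cimp (.atom c) (.atom d)}) :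
    ¬ Proof Γ (.atom b) := by
  intro h
  have hforces := h.forces (v := fun t w => w = true ∧ (t = b ∨ t = d))
    (prs := [(a, b), (c, d)]) (fun _ ht => ⟨rfl, ht.2⟩) (by simp [hab, had, hcb, hcd])
    (by
      intro q hq w
      rcases hΓ hq with rfl | rfl
      exacts [.inr ⟨(a, b), by simp, fun _ _ hp => hp, fun _ _ hb => hb⟩,
        .inr ⟨(c, d), by simp, fun _ _ hp => hp, fun _ _ hb => hb⟩])
  simpa [Forces] using hforces false

end PCL

section Atoms

variable {σ : Subst} {n : Name}

@[simp] theorem substAtom_inr (v : Var) : substAtom σ (.inr v) = σ v := rfl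

theorem fuseSubst_of_mem {V : Finset Var} {v : Var} (hv : v ∈ V) : fuseSubst V n v = .inl n :=
  if_pos hv

theorem fuseSubst_of_notMem {V : Finset Var} {v : Var} (hv : v ∉ V) :
    fuseSubst V n v = .inr v :=
  if_neg hv

theorem fuseSubst_eq_or (V : Finset Var) (v : Var) :
    fuseSubst V n v = .inl n ∨ fuseSubst V n v = .inr v := by
  unfold fuseSubst; split_ifs <;> simp

theorem fuseSubst_ne_of_ssubset {x y : Var} {W : Finset Var} (hxy : x ≠ y) (hW : W ⊂ {x, y}) :
    fuseSubst W n x ≠ fuseSubst W n y := by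
  have hxW : x ∉ W ∨ y ∉ W := by
    by_contra! h
    exact hW.not_subset (by simp [Finset.insert_subset_iff, h.1, h.2])
  rcases hxW with hxW | hyW
  · rw [fuseSubst_of_notMem hxW]
    unfold fuseSubst; split_ifs <;> simp [hxy]
  · rw [fuseSubst_of_notMem hyW]
    unfold fuseSubst; split_ifs <;> simp [hxy]

@[simp] theorem singleSubst_self (x : Var) : singleSubst x n x = .inl n := if_pos rfl

theorem singleSubst_of_ne {x v : Var} (hv : v ≠ x) : singleSubst x n v = .inr v := if_neg hv

@[simp] theorem maskAtom_inr_self (y : Var) : maskAtom σ (.inr y) y = .inr y := if_pos rfl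

theorem maskAtom_inr_of_ne {y v : Var} (hv : v ≠ y) : maskAtom σ (.inr y) v = σ v := if_neg hv

theorem substAtom_maskAtom (a t : Atom) :
    substAtom (maskAtom σ a) t = t ∨ substAtom (maskAtom σ a) t = substAtom σ t := by
  rcases a with _ | y
  · exact .inr rfl
  rcases t with _ | v
  · exact .inl rfl
  by_cases hv : v = y
  · subst hv; simp
  · simp [maskAtom_inr_of_ne hv]

@[simp] theorem swapAtom_left (a b : Atom) : swapAtom a b a = b := if_pos rfl

@[simp] theorem swapAtom_right (a b : Atom) : swapAtom a b b = a := by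
  unfold swapAtom; split_ifs with h <;> simp_all

theorem swapAtom_of_ne {a b c : Atom} (ha : c ≠ a) (hb : c ≠ b) : swapAtom a b c = c := by
  simp [swapAtom, ha, hb]

theorem swapAtom_swapAtom (a b c : Atom) : swapAtom a b (swapAtom a b c) = c := by
  by_cases ha : c = a
  · subst ha; simp
  by_cases hb : c = b
  · subst hb; simp
  rw [swapAtom_of_ne ha hb, swapAtom_of_ne ha hb]

theorem substAtom_singleSubst_swapAtom {a b : Var} (n : Name) {t : Atom} (ht : t ≠ .inr b) :
    substAtom (singleSubst b n) (swapAtom (.inr a) (.inr b) t) =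
      substAtom (singleSubst a n) t := by
  rcases t with m | v
  · rfl
  by_cases hva : v = a
  · subst hva; simp
  · have hvb : v ≠ b := fun h => ht (by rw [h])
    rw [swapAtom_of_ne (by simpa using hva) ht]
    simp [singleSubst_of_ne hva, singleSubst_of_ne hvb]

theorem maskAtom_singleSubst_self (x : Var) : maskAtom (singleSubst x n) (.inr x) = .inr := by
  funext v
  by_cases hv : v = x
  · subst hv; simp
  · simp [maskAtom_inr_of_ne hv, singleSubst_of_ne hv]

theorem maskAtom_singleSubst_of_ne {x : Var} {u : Atom} (hu : u ≠ .inr x) :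
    maskAtom (singleSubst x n) u = singleSubst x n := by
  rcases u with _ | y
  · rfl
  funext v
  by_cases hv : v = y
  · subst hv; rw [maskAtom_inr_self, singleSubst_of_ne fun h => hu (congrArg Sum.inr h)]
  · exact maskAtom_inr_of_ne hv

end Atoms

section Formulas

variable {Pred : Type}

theorem pclCS_subst (σ : Subst) (c : (pclCS Pred).D) :
    (pclCS Pred).subst σ c = (pclCS Pred).ren (substAtom σ) c := rfl

theorem pclCS_ren_ren (f g : Atom → Atom) (c : (pclCS Pred).D) :
    (pclCS Pred).ren f ((pclCS Pred).ren g c) = (pclCS Pred).ren (f ∘ g) c := by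
  induction c with
  | atom pa => simp [pclCS, PCL.mapAtoms]
  | top | bot => rfl
  | and p q ihp ihq | or p q ihp ihq | imp p q ihp ihq | cimp p q ihp ihq =>
    simp_all [pclCS, PCL.mapAtoms]

theorem pclCS_ren_congr {f g : Atom → Atom} {c : (pclCS Pred).D}
    (h : ∀ t ∈ pclFv c, f t = g t) : (pclCS Pred).ren f c = (pclCS Pred).ren g c := by
  induction c with
  | atom pa => simpa [pclCS, PCL.mapAtoms, pclFv] using List.map_congr_left h
  | top | bot => rfl
  | and p q ihp ihq | or p q ihp ihq | imp p q ihp ihq | cimp p q ihp ihq =>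
    simp only [pclCS, PCL.mapAtoms] at ihp ihq ⊢
    rw [ihp fun t ht => h t (.inl ht), ihq fun t ht => h t (.inr ht)]

theorem pclCS_ren_id (c : (pclCS Pred).D) : (pclCS Pred).ren id c = c := by
  induction c with
  | atom pa => simp [pclCS, PCL.mapAtoms]
  | top | bot => rfl
  | and p q ihp ihq | or p q ihp ihq | imp p q ihp ihq | cimp p q ihp ihq =>
    simp_all [pclCS, PCL.mapAtoms]

theorem pclFv_ren (f : Atom → Atom) (c : (pclCS Pred).D) :
    pclFv ((pclCS Pred).ren f c) = f '' pclFv c := by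
  induction c with
  | atom pa => ext; simp [pclCS, PCL.mapAtoms, pclFv]
  | top | bot => simp [pclCS, PCL.mapAtoms, pclFv]
  | and p q ihp ihq | or p q ihp ihq | imp p q ihp ihq | cimp p q ihp ihq =>
    simp_all [pclCS, PCL.mapAtoms, pclFv, Set.image_union]

theorem pclCS_subst_eq_self {σ : Subst} {c : (pclCS Pred).D}
    (h : ∀ v : Var, .inr v ∈ pclFv c → σ v = .inr v) : (pclCS Pred).subst σ c = c := by
  rw [pclCS_subst, pclCS_ren_congr (g := id), pclCS_ren_id]
  rintro (_ | v) hv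
  exacts [rfl, h v hv]

theorem pclFv_finite (c : (pclCS Pred).D) : (pclFv c).Finite := by
  induction c with
  | atom pa => exact pa.2.finite_toSet
  | top | bot => exact Set.finite_empty
  | and p q ihp ihq | or p q ihp ihq | imp p q ihp ihq | cimp p q ihp ihq =>
    exact ihp.union ihq

theorem pclCS_subst_ren_swapAtom {a b : Var} (n : Name) {c : (pclCS Pred).D}
    (hb : .inr b ∉ pclFv c) :
    (pclCS Pred).subst (singleSubst b n) ((pclCS Pred).ren (swapAtom (.inr a) (.inr b)) c) =
      (pclCS Pred).subst (singleSubst a n) c := by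
  rw [pclCS_subst, pclCS_subst, pclCS_ren_ren]
  exact pclCS_ren_congr fun t ht =>
    substAtom_singleSubst_swapAtom n (ne_of_mem_of_not_mem ht hb)

end Formulas

section Prefixes

variable {Pred : Type}

theorem Prefix.substP_eq_renP (σ : Subst) (π : Prefix (pclCS Pred).D) :
    π.substP (pclCS Pred) σ = π.renP (pclCS Pred) (substAtom σ) := by
  cases π <;> rfl

theorem Prefix.fvP_renP_subset (f : Atom → Atom) (π : Prefix (pclCS Pred).D) :
    (π.renP (pclCS Pred) f).fvP (pclCS Pred) ⊆ f '' π.fvP (pclCS Pred) := by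
  cases π with
  | tau => simp [Prefix.renP, Prefix.fvP]
  | tell c | check c | ask c => exact (pclFv_ren f c).subset
  | join x c | fuse x c =>
    have hc : pclFv ((pclCS Pred).ren f c) ⊆ f '' insert (.inr x) (pclFv c) :=
      (pclFv_ren f c).subset.trans (Set.image_mono (Set.subset_insert _ _))
    rcases hx : f (.inr x) with m | y <;>
      simp only [Prefix.renP, Prefix.fvP, hx, Set.insert_subset_iff] <;>
      first | exact hc | exact ⟨⟨.inr x, Set.mem_insert _ _, hx⟩, hc⟩

theorem Prefix.renP_congr {f g : Atom → Atom} {π : Prefix (pclCS Pred).D}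
    (h : ∀ t ∈ π.fvP (pclCS Pred), f t = g t) :
    π.renP (pclCS Pred) f = π.renP (pclCS Pred) g := by
  cases π with
  | tau => rfl
  | tell c | check c | ask c => simp only [Prefix.renP, pclCS_ren_congr h]
  | join x c | fuse x c =>
    simp only [Prefix.renP, h (.inr x) (Set.mem_insert _ _),
      pclCS_ren_congr fun t ht => h t (Set.mem_insert_of_mem _ ht)]

theorem Prefix.subst_eq_self {σ : Subst} {π : Prefix (pclCS Pred).D}
    (h : ∀ v : Var, .inr v ∈ π.fvP (pclCS Pred) → σ v = .inr v) :
    π.substP (pclCS Pred) σ = π := by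
  rw [Prefix.substP_eq_renP, Prefix.renP_congr (g := id)]
  · cases π <;> simp [Prefix.renP, pclCS_ren_id]
  · rintro (_ | v) hv
    exacts [rfl, h v hv]

theorem Prefix.substP_renP_swapAtom {a b : Var} (n : Name) {π : Prefix (pclCS Pred).D}
    (hb : .inr b ∉ π.fvP (pclCS Pred)) :
    (π.renP (pclCS Pred) (swapAtom (.inr a) (.inr b))).substP (pclCS Pred) (singleSubst b n) =
      π.substP (pclCS Pred) (singleSubst a n) := by
  cases π with
  | tau => rfl
  | tell c | check c | ask c =>
    simp only [Prefix.renP, Prefix.substP, pclCS_subst_ren_swapAtom n hb]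
  | join x c | fuse x c =>
    have hc := pclCS_subst_ren_swapAtom (a := a) n fun h => hb (Set.mem_insert_of_mem _ h)
    have hxb : x ≠ b := fun h => hb (by simp [Prefix.fvP, h])
    by_cases hxa : x = a
    · subst hxa
      simp [Prefix.renP, Prefix.substP, hc]
    · have hx : swapAtom (.inr a) (.inr b) (.inr x) = .inr x :=
        swapAtom_of_ne (by simpa using hxa) (by simpa using hxb)
      simp [Prefix.renP, Prefix.substP, hx, hc, singleSubst_of_ne hxa, singleSubst_of_ne hxb]

end Prefixes

theorem Proc.free_subset_atoms (CS : ConstraintSystem) (P : Proc CS.D) :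
    P.free CS ⊆ P.atoms CS := by
  induction P with
  | nil | con | const => exact subset_rfl
  | act π P ih => exact Set.union_subset_union subset_rfl ih
  | choice P Q ihP ihQ | par P Q ihP ihQ => exact Set.union_subset_union ihP ihQ
  | delim a P ih => exact Set.sdiff_subset.trans (ih.trans (Set.subset_insert _ _))

section Processes

variable {Pred : Type}

theorem Proc.atoms_finite (P : Proc (pclCS Pred).D) : (P.atoms (pclCS Pred)).Finite := by
  induction P with
  | nil => exact Set.finite_empty
  | con c => exact pclFv_finite c
  | act π P ih =>
    refine Set.Finite.union ?_ ih
    cases π with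
    | tau => exact Set.finite_empty
    | tell c | check c | ask c => exact pclFv_finite c
    | join x c | fuse x c => exact (pclFv_finite c).insert _
  | choice P Q ihP ihQ | par P Q ihP ihQ => exact ihP.union ihQ
  | delim a P ih => exact ih.insert _
  | const X args => exact args.finite_toSet

theorem Proc.exists_fresh (Ps : List (Proc (pclCS Pred).D)) :
    ∃ M : ℕ, ∀ k, M ≤ k → ∀ P ∈ Ps,
      (.inl k : Atom) ∉ P.atoms (pclCS Pred) ∧ (.inr k : Atom) ∉ P.atoms (pclCS Pred) := by
  have hfin : (Sum.elim id id '' ⋃ P ∈ Ps, P.atoms (pclCS Pred)).Finite :=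
    (Set.Finite.biUnion Ps.finite_toSet fun P _ => P.atoms_finite).image _
  obtain ⟨B, hB⟩ := hfin.bddAbove
  refine ⟨B + 1, fun k hk P hP => ⟨fun h => ?_, fun h => ?_⟩⟩
  · have : k ≤ B := hB ⟨.inl k, Set.mem_biUnion hP h, rfl⟩; omega
  · have : k ≤ B := hB ⟨.inr k, Set.mem_biUnion hP h, rfl⟩; omega

theorem Proc.atoms_ren_subset (f : Atom → Atom) (P : Proc (pclCS Pred).D) :
    (P.ren (pclCS Pred) f).atoms (pclCS Pred) ⊆ f '' P.atoms (pclCS Pred) := by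
  induction P with
  | nil => simp [Proc.ren, Proc.atoms]
  | con c => exact (pclFv_ren f c).subset
  | act π P ih =>
    rw [Proc.atoms, Set.image_union]
    exact Set.union_subset_union (Prefix.fvP_renP_subset f π) ih
  | choice P Q ihP ihQ | par P Q ihP ihQ =>
    rw [Proc.atoms, Set.image_union]
    exact Set.union_subset_union ihP ihQ
  | delim a P ih =>
    rw [Proc.atoms, Set.image_insert_eq]
    exact Set.insert_subset_insert ih
  | const X args => intro t; simp [Proc.ren, Proc.atoms]

theorem Proc.atoms_subst_subset (P : Proc (pclCS Pred).D) :
    ∀ σ : Subst, (P.subst (pclCS Pred) σ).atoms (pclCS Pred) ⊆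
      P.atoms (pclCS Pred) ∪ substAtom σ '' P.atoms (pclCS Pred) := by
  induction P with
  | nil => simp [Proc.subst, Proc.atoms]
  | con c => exact fun σ => (pclFv_ren _ c).subset.trans Set.subset_union_right
  | act π P ih =>
    intro σ
    rw [Proc.atoms, Set.image_union]
    refine Set.union_subset ?_ ((ih σ).trans ?_)
    · rw [Prefix.substP_eq_renP]
      exact (Prefix.fvP_renP_subset _ π).trans (Set.subset_union_of_subset_right
        Set.subset_union_left _)
    · exact Set.union_subset_union Set.subset_union_right Set.subset_union_right
  | choice P Q ihP ihQ | par P Q ihP ihQ =>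
    intro σ
    rw [Proc.atoms, Set.image_union]
    refine Set.union_subset ((ihP σ).trans ?_) ((ihQ σ).trans ?_) <;>
      exact Set.union_subset_union (by simp) (by simp)
  | delim a P ih =>
    intro σ t ht
    rcases ht with rfl | ht
    · exact .inl (Set.mem_insert _ _)
    rcases ih _ ht with ht | ⟨s, hs, rfl⟩
    · exact .inl (Set.mem_insert_of_mem _ ht)
    rcases substAtom_maskAtom (σ := σ) a s with h | h <;> rw [h]
    · exact .inl (Set.mem_insert_of_mem _ hs)
    · exact .inr ⟨s, Set.mem_insert_of_mem _ hs, rfl⟩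
  | const X args =>
    intro σ t ht
    simp only [Proc.subst, Proc.atoms, Set.mem_ofPred_eq, List.mem_map] at ht
    obtain ⟨s, hs, rfl⟩ := ht
    exact .inr ⟨s, hs, rfl⟩

theorem Proc.subst_eq_self (P : Proc (pclCS Pred).D) :
    ∀ {σ : Subst}, (∀ v : Var, .inr v ∈ P.atoms (pclCS Pred) → σ v = .inr v) →
      P.subst (pclCS Pred) σ = P := by
  induction P with
  | nil => exact fun _ => rfl
  | con c =>
    intro σ h
    exact congrArg Proc.con (pclCS_subst_eq_self h)
  | act π P ih =>
    intro σ h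
    simp only [Proc.subst, Prefix.subst_eq_self fun v hv => h v (.inl hv),
      ih fun v hv => h v (.inr hv)]
  | choice P Q ihP ihQ | par P Q ihP ihQ =>
    intro σ h
    simp only [Proc.subst, ihP fun v hv => h v (.inl hv), ihQ fun v hv => h v (.inr hv)]
  | delim a P ih =>
    intro σ h
    simp only [Proc.subst]
    rw [ih]
    intro v hv
    rcases substAtom_maskAtom (σ := σ) a (.inr v) with h' | h'
    · exact h'
    · exact h'.trans (h v (Set.mem_insert_of_mem _ hv))
  | const X args =>
    intro σ h
    simp only [Proc.subst, Proc.const.injEq, true_and]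
    conv_rhs => rw [← List.map_id args]
    refine List.map_congr_left fun t ht => ?_
    rcases t with _ | v
    exacts [rfl, h v ht]

theorem Proc.notMem_atoms_ren_swapAtom {P : Proc (pclCS Pred).D} {a b t : Atom}
    (ht : t ∉ P.atoms (pclCS Pred)) (ha : t ≠ a) (hb : t ≠ b) :
    t ∉ (P.ren (pclCS Pred) (swapAtom a b)).atoms (pclCS Pred) := by
  intro hmem
  obtain ⟨s, hs, hst⟩ := P.atoms_ren_subset _ hmem
  rw [← swapAtom_swapAtom a b s, hst, swapAtom_of_ne ha hb] at hs
  exact ht hs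

theorem Proc.notMem_atoms_subst {P : Proc (pclCS Pred).D} {σ : Subst} {n : Name} {t : Atom}
    (hσ : ∀ v, σ v = .inl n ∨ σ v = .inr v) (ht : t ∉ P.atoms (pclCS Pred))
    (hn : t ≠ .inl n) :
    t ∉ (P.subst (pclCS Pred) σ).atoms (pclCS Pred) := by
  intro hmem
  rcases P.atoms_subst_subset σ hmem with h | ⟨s | v, hs, rfl⟩
  · exact ht h
  · exact ht hs
  · rcases hσ v with h | h <;> simp only [substAtom_inr, h] at ht hn
    exacts [hn rfl, ht hs]

/-- Only up to alpha-conversion: the renaming also renames bound occurrences, which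
substitution skips. -/
theorem Proc.alphaEq_subst_ren_swapAtom (P : Proc (pclCS Pred).D) {a b : Var} (n : Name) :
    .inr b ∉ P.atoms (pclCS Pred) →
    AlphaEq (pclCS Pred)
      ((P.ren (pclCS Pred) (swapAtom (.inr a) (.inr b))).subst (pclCS Pred) (singleSubst b n))
      (P.subst (pclCS Pred) (singleSubst a n)) := by
  induction P with
  | nil => exact fun _ => .refl _
  | con c =>
    intro hb
    simp only [Proc.ren, Proc.subst, pclCS_subst_ren_swapAtom n hb]
    exact .refl _
  | act π P ih =>
    intro hb
    simp only [Proc.ren, Proc.subst, Prefix.substP_renP_swapAtom n fun h => hb (.inl h)]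
    exact .act (ih fun h => hb (.inr h))
  | choice P Q ihP ihQ => exact fun hb => .choice (ihP (hb ∘ .inl)) (ihQ (hb ∘ .inr))
  | par P Q ihP ihQ => exact fun hb => .par (ihP (hb ∘ .inl)) (ihQ (hb ∘ .inr))
  | delim u P ih =>
    intro hb
    have hbP : .inr b ∉ P.atoms (pclCS Pred) := hb ∘ Set.mem_insert_of_mem _
    have hub : u ≠ .inr b := fun h => hb (h ▸ Set.mem_insert _ _)
    by_cases hua : u = .inr a
    · subst hua
      simp only [Proc.ren, Proc.subst, swapAtom_left, maskAtom_singleSubst_self]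
      rw [Proc.subst_eq_self _ fun _ _ => rfl, Proc.subst_eq_self _ fun _ _ => rfl]
      exact .symm (.rename hbP)
    · simp only [Proc.ren, Proc.subst, swapAtom_of_ne hua hub, maskAtom_singleSubst_of_ne hua,
        maskAtom_singleSubst_of_ne hub]
      exact .delim (ih hbP)
  | const X args =>
    intro hb
    have hargs : (args.map (swapAtom (.inr a) (.inr b))).map (substAtom (singleSubst b n)) =
        args.map (substAtom (singleSubst a n)) := by
      rw [List.map_map]
      exact List.map_congr_left fun t ht =>
        substAtom_singleSubst_swapAtom n fun h => hb (h ▸ ht : _ ∈ args)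
    simp only [Proc.ren, Proc.subst, hargs]
    exact .refl _

end Processes

section Semantics

variable {CS : ConstraintSystem} {env : Env CS.D}

theorem notMem_setFv {t : Atom} {C : Set CS.D} :
    t ∉ setFv CS C ↔ ∀ c ∈ C, t ∉ CS.fv c := by
  simp [setFv]

theorem SideCond.empty (C : Set CS.D) (β : BAct CS.D) (P' Q' : Proc CS.D) :
    SideCond CS ∅ ∅ C β P' Q' :=
  ⟨by simp, by simp⟩

theorem AlphaEq.rename_var {a b : Var} {P Q : Proc CS.D} (hb : .inr b ∉ P.atoms CS)
    (hQ : P.ren CS (swapAtom (.inr a) (.inr b)) = Q) :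
    AlphaEq CS (.delim (.inr a) P) (.delim (.inr b) Q) :=
  hQ ▸ .rename hb

theorem TopRed.of_alphaEq {P Q R : Proc CS.D} (h : TopRed CS env Q R) (hPQ : AlphaEq CS P Q) :
    TopRed CS env P R := by
  cases h with
  | topTau h => exact .topTau (.alphaC hPQ h)
  | topCheck h hc => exact .topCheck (.alphaC hPQ h) hc

theorem TopRed.transGen_of_alphaEq {P Q R : Proc CS.D} (hPQ : AlphaEq CS P Q)
    (h : Relation.TransGen (TopRed CS env) Q R) : Relation.TransGen (TopRed CS env) P R := by
  obtain ⟨Q', hQQ', hQ'R⟩ := Relation.TransGen.head'_iff.1 h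
  exact .head' (hQQ'.of_alphaEq hPQ) hQ'R

theorem StructEq.par_rotate (P Q R S : Proc CS.D) :
    StructEq CS env (.par P (.par Q (.par R S))) (.par S (.par P (.par Q R))) :=
  .trans (.parCong (.refl P) (.symm (.parAssoc Q R S)))
    (.trans (.symm (.parAssoc P (.par Q R) S)) (.parComm _ _))

theorem TopRed.delim_par_left (a : Atom) {P P' : Proc CS.D} (Q : Proc CS.D)
    (h : LTS CS env P ⟨∅, .tau⟩ P') :
    TopRed CS env (.delim a (.par P Q)) (.delim a (.par P' Q)) :=
  .topTau (.del (.parTauL h) (by simp [Act.fa, BAct.fa]))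

theorem LTS.delim_open (a : Atom) {P P' : Proc CS.D} {β : BAct CS.D}
    (h : LTS CS env P ⟨∅, β⟩ P') : LTS CS env (.delim a P) ⟨{a}, β⟩ P' := by
  simpa using h.openB (a := a)

theorem LTS.con_par (c : CS.D) {P P' : Proc CS.D} {C : Set CS.D}
    (h : LTS CS env P ⟨∅, .constr C⟩ P') :
    LTS CS env (.par (.con c) P) ⟨∅, .constr (insert c C)⟩ (.par (.con c) P') := by
  simpa using LTS.parConstr .constrA h (.empty _ _ _ _)

theorem LTS.con_par_sum (c : CS.D) {P : Proc CS.D} (hP : IsSum P) :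
    LTS CS env (.par (.con c) P) ⟨∅, .constr {c}⟩ (.par (.con c) P) := by
  simpa using LTS.parConstr (env := env) .constrA (.idleSum hP) (.empty _ _ _ _)

theorem LTS.con_par_fuse (c d : CS.D) (x : Var) (P : Proc CS.D) :
    LTS CS env (.par (.con c) (.act (.fuse x d) P)) ⟨∅, .fuseA {c} x d⟩
      (.par (.con c) P) := by
  simpa using LTS.parFuseL (env := env) .constrA .fuseA (.empty _ _ _ _)

theorem LTS.sum_par_sum {P Q : Proc CS.D} (hP : IsSum P) (hQ : IsSum Q) :
    LTS CS env (.par P Q) ⟨∅, .constr ∅⟩ (.par P Q) := by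
  simpa using LTS.parConstr (env := env) (.idleSum hP) (.idleSum hQ) (.empty _ _ _ _)

theorem LTS.sum_par_join {P : Proc CS.D} (hP : IsSum P) (x : Var) (c : CS.D)
    (Q : Proc CS.D) :
    LTS CS env (.par P (.act (.join x c) Q)) ⟨∅, .joinA ∅ x c⟩ (.par P Q) := by
  simpa using LTS.parJoinL (env := env) (.idleSum hP) .joinA (.empty _ _ _ _)

theorem LTS.sum_par_check {P : Proc CS.D} (hP : IsSum P) (c : CS.D) (Q : Proc CS.D) :
    LTS CS env (.par P (.act (.check c) Q)) ⟨∅, .checkA {c}⟩ (.par P Q) := by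
  simpa using LTS.parCheckL (env := env) (.idleSum hP) .checkA (.empty _ _ _ _)

theorem LTS.parConstr_of_idle {P Q P' Q' : Proc CS.D} {A : Finset Atom} {C : Set CS.D}
    (h₁ : LTS CS env P ⟨A, .constr C⟩ P') (h₂ : LTS CS env Q ⟨∅, .constr ∅⟩ Q')
    (hA : ∀ a ∈ A, a ∉ Q'.free CS) :
    LTS CS env (.par P Q) ⟨A, .constr C⟩ (.par P' Q') := by
  simpa using
    h₁.parConstr h₂ ⟨fun a ha => ⟨by simp, by simp [BAct.fa, setFv], hA a ha⟩, by simp⟩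

theorem LTS.parJoinL_of_empty {P Q P' Q' : Proc CS.D} {B : Finset Atom} {C C' : Set CS.D}
    {x : Var} {c : CS.D} (h₁ : LTS CS env P ⟨∅, .constr C⟩ P')
    (h₂ : LTS CS env Q ⟨B, .joinA C' x c⟩ Q')
    (hB : ∀ b ∈ B, b ∉ setFv CS C ∧ b ∉ P'.free CS) :
    LTS CS env (.par P Q) ⟨B, .joinA (C ∪ C') x c⟩ (.par P' Q') := by
  simpa using h₁.parJoinL h₂ ⟨by simp, hB⟩

theorem LTS.parCheckL_of_empty {P Q P' Q' : Proc CS.D} {C C' : Set CS.D}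
    (h₁ : LTS CS env P ⟨∅, .constr C⟩ P') (h₂ : LTS CS env Q ⟨∅, .checkA C'⟩ Q') :
    LTS CS env (.par P Q) ⟨∅, .checkA (C ∪ C')⟩ (.par P' Q') := by
  simpa using h₁.parCheckL h₂ (.empty _ _ _ _)

theorem LTS.delim_tell (a : Atom) (c : CS.D) (P : Proc CS.D) :
    LTS CS env (.delim a (.act (.tell c) P)) ⟨∅, .tau⟩ (.delim a (.par (.con c) P)) :=
  .del .tellA (by simp [Act.fa, BAct.fa])

end Semantics


namespace Judge

theorem CS_fv (c : F) : CS.fv c = pclFv c := rfl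

theorem CS_ren (f : Atom → Atom) (c : F) :
    CS.ren f c = c.mapAtoms fun pa => (pa.1, pa.2.map f) := rfl

theorem CS_subst (σ : Subst) (c : F) :
    CS.subst σ c = c.mapAtoms fun pa => (pa.1, pa.2.map (substAtom σ)) := rfl

/-! `Buyer NoPay`, `Seller NoSend` and `JudgeP jb js` are by definition
`buyerAt NoPay 0`, `sellerAt NoSend 1` and `judgeAt jb js 2`; the session variable is a
parameter so that it can be renamed apart from the continuations. -/

def buyerContract (t : Atom) : F := .cimp (sendP t) (payP t)

def sellerContract (t : Atom) : F := .cimp (payP t) (sendP t)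

def checkOutAt (np : Proc F) (t : Atom) : Proc F :=
  .choice (.act .tau np)
    (.act .tau (.act (.tell (paidP t))
      (.choice (.act .tau (.act (.tell (disputeP t)) .nil))
        (.act (.ask (sentP t)) .nil))))

def shipAt (ns : Proc F) (t : Atom) : Proc F :=
  .choice (.act .tau ns)
    (.act .tau (.act (.tell (sentP t))
      (.choice (.act .tau (.act (.tell (disputeP t)) .nil))
        (.act (.ask (paidP t)) .nil))))

def buyerFusing (np : Proc F) (x : Var) : Proc F :=
  .par (.con (buyerContract (.inr x))) (.act (.fuse x (payP (.inr x))) (checkOutAt np (.inr x)))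

def sellerFusing (ns : Proc F) (y : Var) : Proc F :=
  .par (.con (sellerContract (.inr y))) (.act (.fuse y (sendP (.inr y))) (shipAt ns (.inr y)))

def buyerAt (np : Proc F) (x : Var) : Proc F :=
  .delim (.inr x) (.act (.tell (buyerContract (.inr x)))
    (.act (.fuse x (payP (.inr x))) (checkOutAt np (.inr x))))

def sellerAt (ns : Proc F) (y : Var) : Proc F :=
  .delim (.inr y) (.act (.tell (sellerContract (.inr y)))
    (.act (.fuse y (sendP (.inr y))) (shipAt ns (.inr y))))

def buyerBranch (jb : Proc F) (z : Var) : Proc F :=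
  .act (.join z (.and (payP (.inr z)) (disputeP (.inr z))))
    (.act (.check (neg (paidP (.inr z)))) jb)

def sellerBranch (js : Proc F) (z : Var) : Proc F :=
  .act (.join z (.and (sendP (.inr z)) (disputeP (.inr z))))
    (.act (.check (neg (sentP (.inr z)))) js)

def judgeAt (jb js : Proc F) (z : Var) : Proc F :=
  .delim (.inr z) (.par (buyerBranch jb z) (sellerBranch js z))

def session (np ns jb js : Proc F) (x y z : Var) : Proc F :=
  .par (buyerAt np x) (.par (sellerAt ns y) (judgeAt jb js z))

def sellerWaiting (ns : Proc F) (t : Atom) : Proc F :=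
  .par (.con (sellerContract t)) (.act (.ask (sendP t)) (shipAt ns t))

def buyerDisputed (t : Atom) : Proc F :=
  .par (.con (buyerContract t)) (.par (.con (paidP t)) (.par (.con (disputeP t)) .nil))

def buyerCase (jb : Proc F) (t : Atom) : Proc F :=
  .act (.ask (.and (payP t) (disputeP t))) (.act (.check (neg (paidP t))) jb)

section FreeAtoms

variable {s t : Atom}

@[simp] theorem mem_fv_payP : s ∈ CS.fv (payP t) ↔ s = t := by simp [CS_fv, pclFv, payP]

@[simp] theorem mem_fv_sendP : s ∈ CS.fv (sendP t) ↔ s = t := by simp [CS_fv, pclFv, sendP]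

@[simp] theorem mem_fv_paidP : s ∈ CS.fv (paidP t) ↔ s = t := by simp [CS_fv, pclFv, paidP]

@[simp] theorem mem_fv_disputeP : s ∈ CS.fv (disputeP t) ↔ s = t := by
  simp [CS_fv, pclFv, disputeP]

@[simp] theorem mem_fv_buyerContract : s ∈ CS.fv (buyerContract t) ↔ s = t := by
  simp [CS_fv, pclFv, buyerContract, sendP, payP]

@[simp] theorem mem_fv_sellerContract : s ∈ CS.fv (sellerContract t) ↔ s = t := by
  simp [CS_fv, pclFv, sellerContract, sendP, payP]

@[simp] theorem mem_atoms_checkOutAt {np : Proc F} :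
    s ∈ (checkOutAt np t).atoms CS ↔ s = t ∨ s ∈ np.atoms CS := by
  simp [checkOutAt, Proc.atoms, Prefix.fvP, CS_fv, pclFv, paidP, sentP, disputeP]

@[simp] theorem mem_atoms_shipAt {ns : Proc F} :
    s ∈ (shipAt ns t).atoms CS ↔ s = t ∨ s ∈ ns.atoms CS := by
  simp [shipAt, Proc.atoms, Prefix.fvP, CS_fv, pclFv, paidP, sentP, disputeP]

@[simp] theorem mem_atoms_judgeAt {jb js : Proc F} {z : Var} :
    s ∈ (judgeAt jb js z).atoms CS ↔ s = .inr z ∨ s ∈ jb.atoms CS ∨ s ∈ js.atoms CS := by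
  simp [judgeAt, buyerBranch, sellerBranch, Proc.atoms, Prefix.fvP, CS_fv, pclFv, neg, payP,
    sendP, paidP, sentP, disputeP, or_assoc]

end FreeAtoms

section Substitution

variable (σ : Subst)

theorem subst_buyerContract (t : Atom) :
    CS.subst σ (buyerContract t) = buyerContract (substAtom σ t) := rfl

theorem subst_sellerContract (t : Atom) :
    CS.subst σ (sellerContract t) = sellerContract (substAtom σ t) := rfl

theorem subst_sendP (t : Atom) : CS.subst σ (sendP t) = sendP (substAtom σ t) := rfl

theorem checkOutAt_subst (np : Proc F) (t : Atom) :
    (checkOutAt np t).subst CS σ = checkOutAt (np.subst CS σ) (substAtom σ t) := rfl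

theorem shipAt_subst (ns : Proc F) (t : Atom) :
    (shipAt ns t).subst CS σ = shipAt (ns.subst CS σ) (substAtom σ t) := rfl

theorem judgeAt_subst (jb js : Proc F) (z : Var) :
    (judgeAt jb js z).subst CS σ =
      judgeAt (jb.subst CS (maskAtom σ (.inr z))) (js.subst CS (maskAtom σ (.inr z))) z := by
  simp [judgeAt, buyerBranch, sellerBranch, Proc.subst, Prefix.substP, CS_subst, PCL.mapAtoms,
    neg, payP, sendP, paidP, sentP, disputeP]
  rfl

theorem fused_subst (np ns jb js : Proc F) (x y z : Var) (n : Name) :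
    (Proc.par (.par (.con (buyerContract (.inr x))) (checkOutAt np (.inr x)))
        (.par (sellerFusing ns y) (judgeAt jb js z))).subst CS (fuseSubst {x, y} n) =
      .par (.par (.con (buyerContract (.inl n)))
          (checkOutAt (np.subst CS (fuseSubst {x, y} n)) (.inl n)))
        (.par (sellerWaiting (ns.subst CS (fuseSubst {x, y} n)) (.inl n))
          (judgeAt (jb.subst CS (maskAtom (fuseSubst {x, y} n) (.inr z)))
            (js.subst CS (maskAtom (fuseSubst {x, y} n) (.inr z))) z)) := by
  have hx : fuseSubst {x, y} n x = .inl n := fuseSubst_of_mem (by simp)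
  have hy : fuseSubst {x, y} n y = .inl n := fuseSubst_of_mem (by simp)
  simp only [sellerFusing, Proc.subst, subst_buyerContract, subst_sellerContract, subst_sendP,
    checkOutAt_subst, shipAt_subst, judgeAt_subst, substAtom_inr, hx, hy, Prefix.substP]
  rfl

theorem joined_subst (ns jb js : Proc F) (z : Var) (n : Name) :
    (Proc.par (buyerDisputed (.inl n)) (.par (sellerWaiting ns (.inl n))
        (.par (buyerBranch jb z) (.act (.check (neg (sentP (.inr z)))) js)))).subst CS
        (singleSubst z n) =
      .par (buyerDisputed (.inl n)) (.par (sellerWaiting (ns.subst CS (singleSubst z n)) (.inl n))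
        (.par (buyerCase (jb.subst CS (singleSubst z n)) (.inl n))
          (.act (.check (neg (sentP (.inl n)))) (js.subst CS (singleSubst z n))))) := by
  simp [buyerDisputed, sellerWaiting, buyerBranch, buyerCase, Proc.subst, Prefix.substP, CS_subst,
    PCL.mapAtoms, buyerContract, sellerContract, neg, payP, sendP, paidP, sentP, disputeP]
  rfl

end Substitution

section AlphaConversion

variable {a b : Var}

theorem buyerAt_alphaEq (np : Proc F) (hab : a ≠ b) (hb : .inr b ∉ np.atoms CS) :
    AlphaEq CS (buyerAt np a) (buyerAt (np.ren CS (swapAtom (.inr a) (.inr b))) b) :=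
  .rename_var (by simp [Proc.atoms, Prefix.fvP, hb, Ne.symm hab])
    (by simp [Proc.ren, Prefix.renP, CS_ren, PCL.mapAtoms, buyerContract, checkOutAt, payP,
      sendP, paidP, sentP, disputeP]; rfl)

theorem sellerAt_alphaEq (ns : Proc F) (hab : a ≠ b) (hb : .inr b ∉ ns.atoms CS) :
    AlphaEq CS (sellerAt ns a) (sellerAt (ns.ren CS (swapAtom (.inr a) (.inr b))) b) :=
  .rename_var (by simp [Proc.atoms, Prefix.fvP, hb, Ne.symm hab])
    (by simp [Proc.ren, Prefix.renP, CS_ren, PCL.mapAtoms, sellerContract, shipAt, payP,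
      sendP, paidP, sentP, disputeP]; rfl)

theorem judgeAt_alphaEq (jb js : Proc F) (hab : a ≠ b) (hjb : .inr b ∉ jb.atoms CS)
    (hjs : .inr b ∉ js.atoms CS) :
    AlphaEq CS (judgeAt jb js a)
      (judgeAt (jb.ren CS (swapAtom (.inr a) (.inr b)))
        (js.ren CS (swapAtom (.inr a) (.inr b))) b) :=
  .rename_var
    (by simp [buyerBranch, sellerBranch, Proc.atoms, Prefix.fvP, CS_fv, pclFv, neg, payP, sendP,
      paidP, sentP, disputeP, hjb, hjs, Ne.symm hab])
    (by simp [buyerBranch, sellerBranch, Proc.ren, Prefix.renP, CS_ren, PCL.mapAtoms, neg, payP,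
      sendP, paidP, sentP, disputeP]; rfl)

theorem session_alphaEq (np ns jb js : Proc F) {a b c x y z : Var} (hx : a ≠ x) (hy : b ≠ y)
    (hz : c ≠ z) (hnp : .inr x ∉ np.atoms CS) (hns : .inr y ∉ ns.atoms CS)
    (hjb : .inr z ∉ jb.atoms CS) (hjs : .inr z ∉ js.atoms CS) :
    AlphaEq CS (session np ns jb js a b c)
      (session (np.ren CS (swapAtom (.inr a) (.inr x))) (ns.ren CS (swapAtom (.inr b) (.inr y)))
        (jb.ren CS (swapAtom (.inr c) (.inr z))) (js.ren CS (swapAtom (.inr c) (.inr z)))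
        x y z) :=
  .par (buyerAt_alphaEq np hx hnp)
    (.par (sellerAt_alphaEq ns hy hns) (judgeAt_alphaEq jb js hz hjb hjs))

end AlphaConversion

section Entailment

/-- Minimality: below `{x, y}` the two contracts speak about distinct atoms and no longer
handshake. -/
theorem locMinFusion_contracts {x y : Var} (hxy : x ≠ y) (n : Name) :
    CS.LocMinFusion ({sellerContract (.inr y)} ∪ {buyerContract (.inr x)}) {x, y} n
      (payP (.inr x)) := by
  refine ⟨_, subset_rfl, ?_, fun W hW hent => ?_⟩
  · have hx : fuseSubst {x, y} n x = .inl n := fuseSubst_of_mem (by simp)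
    have hy : fuseSubst {x, y} n y = .inl n := fuseSubst_of_mem (by simp)
    show PCL.Proof _ (payP (fuseSubst {x, y} n x))
    rw [hx]
    exact .handshake (a := sendP (.inl n))
      ⟨_, Or.inr rfl, by rw [subst_buyerContract, substAtom_inr, hx]; rfl⟩
      ⟨_, Or.inl rfl, by rw [subst_sellerContract, substAtom_inr, hy]; rfl⟩
  · have hne := fuseSubst_ne_of_ssubset (n := n) hxy hW
    set σ := fuseSubst W n
    refine PCL.not_proof_of_subset_cimp_pair (a := (.send, [σ x])) (c := (.pay, [σ y]))
      (d := (.send, [σ y])) (by simp) (by simp [hne]) (by simp [Ne.symm hne]) (by simp) ?_ hent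
    rintro _ ⟨c, hc | hc, rfl⟩ <;> subst hc
    exacts [Or.inr rfl, Or.inl rfl]

theorem entails_sendP_and_disputeP {C : Set F} {z : Var} {n : Name}
    (hbc : buyerContract (.inl n) ∈ C) (hsc : sellerContract (.inl n) ∈ C)
    (hd : disputeP (.inl n) ∈ C) :
    CS.entails (CS.substSet (singleSubst z n) C)
      (CS.subst (singleSubst z n) (.and (sendP (.inr z)) (disputeP (.inr z)))) := by
  show PCL.Proof _ (.and (sendP (singleSubst z n z)) (disputeP (singleSubst z n z)))
  rw [singleSubst_self]
  exact .mp (.mp .andI (.handshake (a := payP (.inl n)) ⟨_, hsc, rfl⟩ ⟨_, hbc, rfl⟩))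
    (.ax ⟨_, hd, rfl⟩)

/-- Classical model: every atom true except `sent(n)`. -/
theorem not_entails_bot_of_not_sent (n : Name) :
    ¬ CS.entails ({buyerContract (.inl n), paidP (.inl n), disputeP (.inl n)} ∪
      ({sellerContract (.inl n)} ∪ {neg (sentP (.inl n))})) CS.bot := by
  intro h
  refine PCL.Proof.holds (v := fun pa => pa.1 ≠ .sent) h ?_
  rintro q ((rfl | rfl | rfl) | rfl | rfl) <;>
    simp [PCL.Holds, buyerContract, sellerContract, neg, payP, sendP, paidP, sentP, disputeP]

end Entailment

section Trace

variable (env : Env F)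

theorem lts_buyerFusing (np : Proc F) (x : Var) :
    LTS CS env (.delim (.inr x) (buyerFusing np x))
      ⟨{.inr x}, .fuseA {buyerContract (.inr x)} x (payP (.inr x))⟩
      (.par (.con (buyerContract (.inr x))) (checkOutAt np (.inr x))) :=
  .delim_open _ (.con_par_fuse _ _ _ _)

theorem lts_sellerFusing (ns : Proc F) (y : Var) :
    LTS CS env (.delim (.inr y) (sellerFusing ns y))
      ⟨{.inr y}, .constr {sellerContract (.inr y)}⟩ (sellerFusing ns y) :=
  .delim_open _ (.con_par_sum _ trivial)

theorem lts_judgeAt_idle (jb js : Proc F) (z : Var) :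
    LTS CS env (judgeAt jb js z) ⟨∅, .constr ∅⟩ (judgeAt jb js z) :=
  .del (.sum_par_sum trivial trivial) (by simp [Act.fa, BAct.fa, setFv])

theorem lts_sellerWaiting (ns : Proc F) (t : Atom) :
    LTS CS env (sellerWaiting ns t) ⟨∅, .constr {sellerContract t}⟩ (sellerWaiting ns t) :=
  .con_par_sum _ trivial

theorem lts_buyerDisputed (t : Atom) :
    LTS CS env (buyerDisputed t)
      ⟨∅, .constr {buyerContract t, paidP t, disputeP t}⟩ (buyerDisputed t) :=
  .con_par _ (.con_par _ (.con_par_sum _ trivial))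

theorem session_tells (np ns jb js : Proc F) (x y z : Var) :
    Relation.TransGen (TopRed CS env) (session np ns jb js x y z)
      (.par (.delim (.inr x) (buyerFusing np x))
        (.par (.delim (.inr y) (sellerFusing ns y)) (judgeAt jb js z))) :=
  .head (.topTau (.parTauL (.delim_tell _ _ _)))
    (.single (.topTau (.parTauR (.parTauL (.delim_tell _ _ _)))))

theorem topRed_fuse (np ns jb js : Proc F) {x y z : Var} (n : Name) (hxy : x ≠ y)
    (hxz : x ≠ z) (hyz : y ≠ z) (hnp : .inr y ∉ np.atoms CS ∧ .inl n ∉ np.atoms CS)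
    (hns : .inr x ∉ ns.atoms CS ∧ .inl n ∉ ns.atoms CS)
    (hjb : .inr x ∉ jb.atoms CS ∧ .inr y ∉ jb.atoms CS ∧ .inl n ∉ jb.atoms CS)
    (hjs : .inr x ∉ js.atoms CS ∧ .inr y ∉ js.atoms CS ∧ .inl n ∉ js.atoms CS) :
    TopRed CS env
      (.par (.delim (.inr x) (buyerFusing np x))
        (.par (.delim (.inr y) (sellerFusing ns y)) (judgeAt jb js z)))
      (.delim (.inl n)
        (.par (.par (.con (buyerContract (.inl n)))
            (checkOutAt (np.subst CS (fuseSubst {x, y} n)) (.inl n)))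
          (.par (sellerWaiting (ns.subst CS (fuseSubst {x, y} n)) (.inl n))
            (judgeAt (jb.subst CS (maskAtom (fuseSubst {x, y} n) (.inr z)))
              (js.subst CS (maskAtom (fuseSubst {x, y} n) (.inr z))) z)))) := by
  have hseller := (lts_sellerFusing env ns y).parConstr_of_idle (lts_judgeAt_idle env jb js z) (by
    simp only [Finset.mem_singleton, forall_eq]
    exact fun h => by simpa [hyz, hjb, hjs] using Proc.free_subset_atoms _ _ h)
  have hfuse := LTS.parFuseR (lts_buyerFusing env np x) hseller ⟨?_, ?_⟩
  · have hclose := hfuse.closeFuse {x, y} (by simp) (by simp) n ?_ (locMinFusion_contracts hxy n)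
    · have hA : ({.inr y} ∪ {.inr x} : Finset Atom) \ ({x, y} : Finset Var).image .inr = ∅ := by
        ext; simp; tauto
      rw [hA, Finset.toList_empty] at hclose
      exact fused_subst np ns jb js x y z n ▸ .topTau hclose
    · refine ⟨fun h => ?_, notMem_setFv.2 (by rintro c (rfl | rfl) <;> simp), by simp, by simp⟩
      simpa [sellerFusing, Proc.atoms, Prefix.fvP, hnp, hns, hjb, hjs]
        using Proc.free_subset_atoms _ _ h
  · simp only [Finset.mem_singleton, forall_eq, BAct.fa, Set.mem_union, not_or, notMem_setFv]
    refine ⟨by simp [Ne.symm hxy], ⟨⟨by rintro c rfl; simp [Ne.symm hxy], by simp [Ne.symm hxy]⟩,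
      by simp [Ne.symm hxy]⟩, fun h => ?_⟩
    simpa [Proc.atoms, Ne.symm hxy, hnp] using Proc.free_subset_atoms _ _ h
  · simp only [Finset.mem_singleton, forall_eq, notMem_setFv]
    refine ⟨by rintro c rfl; simp [hxy], fun h => ?_⟩
    simpa [sellerFusing, Proc.atoms, Prefix.fvP, hxy, hxz, hns, hjb, hjs]
      using Proc.free_subset_atoms _ _ h

theorem buyer_pays_and_disputes (a : Atom) (np : Proc F) (t : Atom) (R : Proc F) :
    Relation.ReflTransGen (TopRed CS env)
      (.delim a (.par (.par (.con (buyerContract t)) (checkOutAt np t)) R))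
      (.delim a (.par (buyerDisputed t) R)) := by
  have hτ : ∀ C, (⟨∅, .tau⟩ : Act F).base ≠ .constr C := fun _ h => by cases h
  exact .head (.delim_par_left (CS := CS) a R (.parTauR (.sumR .tauA trivial hτ)))
    (.head (.delim_par_left (CS := CS) a R (.parTauR .tellA))
      (.head (.delim_par_left (CS := CS) a R (.parTauR (.parTauR (.sumL .tauA trivial hτ))))
        (.single (.delim_par_left (CS := CS) a R (.parTauR (.parTauR .tellA))))))

theorem topRed_join (ns jb js : Proc F) (z : Var) (n : Name) (hns : .inr z ∉ ns.atoms CS) :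
    TopRed CS env
      (.delim (.inl n) (.par (buyerDisputed (.inl n))
        (.par (sellerWaiting ns (.inl n)) (judgeAt jb js z))))
      (.delim (.inl n) (.par (buyerDisputed (.inl n))
        (.par (sellerWaiting (ns.subst CS (singleSubst z n)) (.inl n))
          (.par (buyerCase (jb.subst CS (singleSubst z n)) (.inl n))
            (.act (.check (neg (sentP (.inl n)))) (js.subst CS (singleSubst z n))))))) := by
  have hjudge : LTS CS env (judgeAt jb js z) _ _ := .delim_open _ (.sum_par_join (by trivial) _ _ _)
  have hseller := (lts_sellerWaiting env ns (.inl n)).parJoinL_of_empty hjudge (by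
    simp only [Finset.mem_singleton, forall_eq, notMem_setFv]
    refine ⟨by rintro c rfl; simp, fun h => ?_⟩
    simpa [sellerWaiting, Proc.atoms, Prefix.fvP, hns] using Proc.free_subset_atoms _ _ h)
  have hall := (lts_buyerDisputed env (.inl n)).parJoinL_of_empty hseller (by
    simp only [Finset.mem_singleton, forall_eq, notMem_setFv]
    refine ⟨by rintro c (rfl | rfl | rfl) <;> simp, fun h => ?_⟩
    simpa [buyerDisputed, Proc.atoms] using Proc.free_subset_atoms _ _ h)
  have hclose := LTS.closeJoin (hall.openB (a := .inl n)) (by simp) (by simp)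
    (entails_sendP_and_disputeP (Or.inl (Or.inl rfl)) (Or.inr (Or.inl rfl))
      (Or.inl (Or.inr (Or.inr rfl))))
  rw [show ((insert (.inl n) {.inr z} : Finset Atom).erase (.inr z)).toList = [.inl n] by
    simp [Finset.erase_insert_of_ne]] at hclose
  exact joined_subst ns jb js z n ▸ .topTau hclose

theorem topRed_check (ns jb js : Proc F) (n : Name) :
    TopRed CS env
      (.delim (.inl n) (.par (buyerDisputed (.inl n)) (.par (sellerWaiting ns (.inl n))
        (.par (buyerCase jb (.inl n)) (.act (.check (neg (sentP (.inl n)))) js)))))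
      (.delim (.inl n) (.par (buyerDisputed (.inl n)) (.par (sellerWaiting ns (.inl n))
        (.par (buyerCase jb (.inl n)) js)))) := by
  have h := (lts_buyerDisputed env (.inl n)).parCheckL_of_empty
    ((lts_sellerWaiting env ns (.inl n)).parCheckL_of_empty
      (.sum_par_check (CS := CS) (P := buyerCase jb (.inl n)) trivial (neg (sentP (.inl n))) js))
  have hcheck := TopRed.topCheck (h.openB (a := .inl n)) (not_entails_bot_of_not_sent n)
  rwa [show (insert (.inl n) ∅ : Finset Atom).toList = [.inl n] by simp] at hcheck

def FreshFrom (M : ℕ) (v : Var) (P : Proc F) : Prop :=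
  ∀ k, M ≤ k → .inl k ∉ P.atoms CS ∧ (k ≠ v → .inr k ∉ P.atoms CS)

theorem freshFrom_ren_swapAtom {M : ℕ} {P : Proc F}
    (hP : ∀ k, M ≤ k → .inl k ∉ P.atoms CS ∧ .inr k ∉ P.atoms CS) {a b : Var} (ha : a < M) :
    FreshFrom M b (P.ren CS (swapAtom (.inr a) (.inr b))) := fun k hk =>
  ⟨Proc.notMem_atoms_ren_swapAtom (hP k hk).1 (by simp) (by simp), fun hkb =>
    Proc.notMem_atoms_ren_swapAtom (hP k hk).2 (Sum.inr_injective.ne (ha.trans_le hk).ne')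
      (Sum.inr_injective.ne hkb)⟩

theorem session_convicts_seller {M : ℕ} (np ns jb js : Proc F) {x y z : Var} (hx : M ≤ x)
    (hxy : x < y) (hyz : y < z) (hnp : FreshFrom M x np) (hns : FreshFrom M y ns)
    (hjb : FreshFrom M z jb) (hjs : FreshFrom M z js) :
    ∃ R T, Relation.TransGen (TopRed CS env) (session np ns jb js x y z) T ∧
      StructEq CS env T (.delim (.inl M) (.par (js.subst CS (singleSubst z M)) R)) := by
  have hxz : x < z := hxy.trans hyz
  have hy : M ≤ y := hx.trans hxy.le
  have hfuse := topRed_fuse env np ns jb js M hxy.ne hxz.ne hyz.ne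
    ⟨(hnp y hy).2 hxy.ne', (hnp M le_rfl).1⟩ ⟨(hns x hx).2 hxy.ne, (hns M le_rfl).1⟩
    ⟨(hjb x hx).2 hxz.ne, (hjb y hy).2 hyz.ne, (hjb M le_rfl).1⟩
    ⟨(hjs x hx).2 hxz.ne, (hjs y hy).2 hyz.ne, (hjs M le_rfl).1⟩
  have hjs_fixed : js.subst CS (maskAtom (fuseSubst {x, y} M) (.inr z)) = js := by
    refine Proc.subst_eq_self js fun v hv => ?_
    by_cases hvz : v = z
    · rw [hvz, maskAtom_inr_self]
    · rw [maskAtom_inr_of_ne hvz, fuseSubst_of_notMem]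
      simp only [Finset.mem_insert, Finset.mem_singleton, not_or]
      exact ⟨fun h => (hjs x hx).2 hxz.ne (h ▸ hv), fun h => (hjs y hy).2 hyz.ne (h ▸ hv)⟩
  rw [hjs_fixed] at hfuse
  have hnsz : .inr z ∉ (ns.subst CS (fuseSubst {x, y} M)).atoms CS :=
    Proc.notMem_atoms_subst (fuseSubst_eq_or _) ((hns z (hy.trans hyz.le)).2 hyz.ne') (by simp)
  exact ⟨_, _, ((session_tells env np ns jb js x y z).tail hfuse).trans_left
    ((buyer_pays_and_disputes env _ _ _ _).tail (topRed_join env _ _ _ z M hnsz) |>.tail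
      (topRed_check env _ _ _ M)), .delimCong (.par_rotate _ _ _ _)⟩

end Trace

end Judge

end Contracts

open Contracts Contracts.Judge

/-- Automated judge conviction: `Buyer | Seller | Judge` has a sequence of
`↣`-reductions reaching `(n)( jailSeller(n) | R )` for some process `R`
(the Buyer pays and opens a dispute, the Seller chooses NoSend, and the Judge
joins the session `n` and convicts the Seller). -/
theorem judge_convicts_seller (env : Env Judge.F)
    (NoPay NoSend jailBuyer jailSeller : Proc Judge.F) :
    ∃ (n : Name) (R T : Proc Judge.F),
      Relation.ReflTransGen (TopRed Judge.CS env)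
        (.par (Buyer NoPay) (.par (Seller NoSend) (JudgeP jailBuyer jailSeller))) T ∧
      StructEq Judge.CS env T
        (.delim (.inl n) (.par (jailSeller.subst Judge.CS (singleSubst 2 n)) R)) := by
  obtain ⟨M, hM⟩ := Proc.exists_fresh [NoPay, NoSend, jailBuyer, jailSeller]
  -- `omega` does not see through the abbreviation `Var`.
  have hvar : ∀ a : Var, a ≤ 2 → ∀ k : ℕ, M + 3 ≤ k → a < k := by unfold Var; omega
  have hfresh : ∀ P ∈ [NoPay, NoSend, jailBuyer, jailSeller], ∀ k, M + 3 ≤ k →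
      .inl k ∉ P.atoms CS ∧ .inr k ∉ P.atoms CS := fun P hP k hk => hM k (by omega) P hP
  obtain ⟨R, T, hred, hT⟩ := session_convicts_seller env _ _ _ _ (x := M + 3) (y := M + 4)
    (z := M + 5) le_rfl (Nat.lt_succ_self _) (Nat.lt_succ_self _)
    (freshFrom_ren_swapAtom (hfresh NoPay (by simp)) (hvar 0 (by decide) _ le_rfl))
    (freshFrom_ren_swapAtom (hfresh NoSend (by simp)) (hvar 1 (by decide) _ le_rfl))
    (freshFrom_ren_swapAtom (hfresh jailBuyer (by simp)) (hvar 2 (by decide) _ le_rfl))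
    (freshFrom_ren_swapAtom (hfresh jailSeller (by simp)) (hvar 2 (by decide) _ le_rfl))
  have hα := session_alphaEq NoPay NoSend jailBuyer jailSeller (x := M + 3) (y := M + 4)
    (z := M + 5) (hvar 0 (by decide) _ le_rfl).ne (hvar 1 (by decide) _ (by omega)).ne
    (hvar 2 (by decide) _ (by omega)).ne (hfresh NoPay (by simp) _ (by omega)).2
    (hfresh NoSend (by simp) _ (by omega)).2 (hfresh jailBuyer (by simp) _ (by omega)).2
    (hfresh jailSeller (by simp) _ (by omega)).2
  have hjs := jailSeller.alphaEq_subst_ren_swapAtom (a := 2) (b := M + 5) (M + 3)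
    (hfresh jailSeller (by simp) _ (by omega)).2
  exact ⟨M + 3, R, T, (TopRed.transGen_of_alphaEq hα hred).to_reflTransGen,
    hT.trans (.delimCong (.parCong (.alpha hjs) (.refl R)))⟩
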